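/- arXiv:math/0610477 — 10 statements merged into one kernel-verified Lean document; each statement's English description precedes it below -/
import Mathlib

section
/- If u and w are compositions with u ≤ w, then u is obtainable from w by a sequence of ‖w‖ − ‖u‖ elementary deletions, where an elementary (1-)deletion either lowers an entry ≥ 2 by 1 or removes an entry equal to 1. Conversely, any composition obtained from w by such a sequence of elementary deletions satisfies u ≤ w. -/
/-- A composition: a word of positive integers. -/
def IsComposition (w : List ℕ) : Prop := ∀ x ∈ w, 1 ≤ x

/-- Containment order on compositions: `u` embeds entrywise into a subword of `w`. -/
def CompLE (u w : List ℕ) : Prop :=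
  ∃ v : List ℕ, v.Sublist w ∧ List.Forall₂ (· ≤ ·) u v

/-- The set of `k`-deletions of `w`: compositions `u ≤ w` with `‖u‖ = ‖w‖ - k`. -/
def kDel (k : ℕ) (w : List ℕ) : Set (List ℕ) :=
  {u | IsComposition u ∧ CompLE u w ∧ u.sum + k = w.sum}

/-- An elementary (1-)deletion: lower an entry ≥ 2 by 1, or remove an entry equal to 1. -/
def ElemDel (w u : List ℕ) : Prop :=
  (∃ a b : List ℕ, ∃ x : ℕ, 2 ≤ x ∧ w = a ++ x :: b ∧ u = a ++ (x - 1) :: b) ∨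
  (∃ a b : List ℕ, w = a ++ 1 :: b ∧ u = a ++ b)

lemma forall₂_sum_le : ∀ {u v : List ℕ}, List.Forall₂ (· ≤ ·) u v → u.sum ≤ v.sum := by
  intro u v h
  induction h with
  | nil => simp
  | cons hxy _ ih => simp only [List.sum_cons]; omega

lemma sublist_of_forall₂ : ∀ {s t t' : List ℕ}, s.Sublist t → List.Forall₂ (· ≤ ·) t t' →
    ∃ s', s'.Sublist t' ∧ List.Forall₂ (· ≤ ·) s s' := by
  intro s t t' hs hf
  induction hf generalizing s with
  | nil =>
    have h : s = [] := List.sublist_nil.mp hs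
    subst h
    exact ⟨[], List.nil_sublist _, List.Forall₂.nil⟩
  | @cons x y t₀ t₀' hxy htt ih =>
    cases hs with
    | cons _ h =>
      obtain ⟨s', hs', hf'⟩ := ih h
      exact ⟨s', hs'.cons _, hf'⟩
    | cons_cons _ h =>
      obtain ⟨s', hs', hf'⟩ := ih h
      exact ⟨y :: s', hs'.cons_cons _, List.Forall₂.cons hxy hf'⟩

lemma compLE_trans {u v w : List ℕ} (h1 : CompLE u v) (h2 : CompLE v w) : CompLE u w := by
  obtain ⟨v1, hs1, hf1⟩ := h1
  obtain ⟨v2, hs2, hf2⟩ := h2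
  obtain ⟨s', hs', hf'⟩ := sublist_of_forall₂ hs1 hf2
  refine ⟨s', hs'.trans hs2, ?_⟩
  clear hs1 hs2 hs'
  induction hf' generalizing u with
  | nil => cases hf1; exact List.Forall₂.nil
  | cons hxy _ ih =>
    cases hf1 with
    | cons hab htail => exact List.Forall₂.cons (le_trans hab hxy) (ih htail)

lemma elemDel_compLE {w u : List ℕ} (h : ElemDel w u) : CompLE u w := by
  rcases h with ⟨a, b, x, hx, hw, hu⟩ | ⟨a, b, hw, hu⟩
  · refine ⟨w, List.Sublist.refl w, ?_⟩
    subst hw hu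
    exact List.rel_append (List.forall₂_refl a)
      (List.Forall₂.cons (by omega) (List.forall₂_refl b))
  · subst hw hu
    exact ⟨a ++ b, (List.Sublist.refl a).append (List.sublist_cons_self 1 b),
      List.forall₂_refl _⟩

lemma elemDel_sum {w u : List ℕ} (h : ElemDel w u) : u.sum + 1 = w.sum := by
  rcases h with ⟨a, b, x, hx, hw, hu⟩ | ⟨a, b, hw, hu⟩ <;> subst hw hu <;>
    simp [List.sum_append] <;> omega

lemma elemDel_comp {w u : List ℕ} (h : ElemDel w u) (hw : IsComposition w) :
    IsComposition u := by
  rcases h with ⟨a, b, x, hx, hw', hu⟩ | ⟨a, b, hw', hu⟩ <;> subst hw' hu <;>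
    intro y hy <;> simp only [List.mem_append, List.mem_cons] at hy
  · rcases hy with hy | hy | hy
    · exact hw y (by simp [hy])
    · have := hw x (by simp); omega
    · exact hw y (by simp [hy])
  · rcases hy with hy | hy
    · exact hw y (by simp [hy])
    · exact hw y (by simp [hy])

lemma elemDel_cons {w u : List ℕ} (a : ℕ) (h : ElemDel w u) : ElemDel (a :: w) (a :: u) := by
  rcases h with ⟨p, q, x, hx, hw, hu⟩ | ⟨p, q, hw, hu⟩
  · exact Or.inl ⟨a :: p, q, x, hx, by simp [hw], by simp [hu]⟩
  · exact Or.inr ⟨a :: p, q, by simp [hw], by simp [hu]⟩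

lemma eq_of_sublist_sum : ∀ {v w : List ℕ}, v.Sublist w → IsComposition w →
    v.sum = w.sum → v = w := by
  intro v w hs
  induction hs with
  | slnil => intro _ _; rfl
  | @cons v t a h ih =>
    intro hc hsum
    have h1 : v.sum ≤ t.sum := h.sum_le_sum (by omega)
    have : 1 ≤ a := hc a (by simp)
    simp only [List.sum_cons] at hsum; omega
  | @cons_cons v t a h ih =>
    intro hc hsum
    have := ih (fun x hx => hc x (by simp [hx])) (by simp only [List.sum_cons] at hsum; omega)
    rw [this]

lemma eq_of_forall₂_sum : ∀ {u w : List ℕ}, List.Forall₂ (· ≤ ·) u w →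
    u.sum = w.sum → u = w := by
  intro u w h
  induction h with
  | nil => intro _; rfl
  | @cons x y _ _ hxy hf ih =>
    intro hsum
    simp only [List.sum_cons] at hsum
    have := forall₂_sum_le hf
    have hx : x = y := by omega
    rw [hx, ih (by omega)]

lemma del_of_sublist : ∀ {v w : List ℕ}, v.Sublist w → IsComposition w →
    v.sum < w.sum → ∃ u', ElemDel w u' ∧ v.Sublist u' := by
  intro v w hs
  induction hs with
  | slnil => intro _ h; omega
  | @cons v t a h ih =>
    intro hc _
    have ha : 1 ≤ a := hc a (by simp)
    rcases eq_or_lt_of_le ha with h1 | h2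
    · exact ⟨t, Or.inr ⟨[], t, by simp [← h1], rfl⟩, h⟩
    · exact ⟨(a - 1) :: t, Or.inl ⟨[], t, a, h2, rfl, rfl⟩, h.cons _⟩
  | @cons_cons v t a h ih =>
    intro hc hsum
    obtain ⟨u'', hd, hsub⟩ := ih (fun x hx => hc x (by simp [hx]))
      (by simp only [List.sum_cons] at hsum; omega)
    exact ⟨a :: u'', elemDel_cons a hd, hsub.cons_cons _⟩

lemma lower_of_forall₂ : ∀ {u w : List ℕ}, List.Forall₂ (· ≤ ·) u w → IsComposition u →
    u.sum < w.sum → ∃ w', ElemDel w w' ∧ List.Forall₂ (· ≤ ·) u w' := by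
  intro u w h
  induction h with
  | nil => intro _ h; simp at h
  | @cons y x u₀ w₀ hxy hf ih =>
    intro hc hsum
    have hy : 1 ≤ y := hc y (by simp)
    rcases eq_or_lt_of_le hxy with h1 | h2
    · obtain ⟨w', hd, hf'⟩ := ih (fun z hz => hc z (by simp [hz]))
        (by simp only [List.sum_cons] at hsum; omega)
      exact ⟨x :: w', elemDel_cons x hd, List.Forall₂.cons hxy hf'⟩
    · exact ⟨(x - 1) :: w₀, Or.inl ⟨[], w₀, x, by omega, rfl, rfl⟩,
        List.Forall₂.cons (by omega) hf⟩

lemma step_lemma {u w : List ℕ} (hu : IsComposition u) (hw : IsComposition w)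
    (h : CompLE u w) (hsum : u.sum < w.sum) :
    ∃ u', ElemDel w u' ∧ IsComposition u' ∧ CompLE u u' ∧ u'.sum + 1 = w.sum := by
  obtain ⟨v, hs, hf⟩ := h
  have hvle : v.sum ≤ w.sum := hs.sum_le_sum (by omega)
  rcases eq_or_lt_of_le hvle with h1 | h2
  · have hv : v = w := eq_of_sublist_sum hs hw h1
    subst hv
    obtain ⟨w', hd, hf'⟩ := lower_of_forall₂ hf hu (by omega)
    exact ⟨w', hd, elemDel_comp hd hw, ⟨w', List.Sublist.refl _, hf'⟩, elemDel_sum hd⟩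
  · obtain ⟨u', hd, hsub⟩ := del_of_sublist hs hw h2
    exact ⟨u', hd, elemDel_comp hd hw, ⟨v, hsub, hf⟩, elemDel_sum hd⟩

lemma main_fwd (u : List ℕ) (hu : IsComposition u) :
    ∀ (n : ℕ) (w : List ℕ), IsComposition w → CompLE u w → w.sum = u.sum + n →
    ∃ f : ℕ → List ℕ, f 0 = w ∧ f n = u ∧ ∀ i < n, ElemDel (f i) (f (i + 1)) := by
  intro n
  induction n with
  | zero =>
    intro w hw h hsum
    obtain ⟨v, hs, hf⟩ := h
    have h1 : u.sum ≤ v.sum := forall₂_sum_le hf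
    have h2 : v.sum ≤ w.sum := hs.sum_le_sum (by omega)
    have hv : v = w := eq_of_sublist_sum hs hw (by omega)
    have huw : u = w := (eq_of_forall₂_sum hf (by omega)).trans hv
    exact ⟨fun _ => w, rfl, huw ▸ rfl, fun i hi => by omega⟩
  | succ n ih =>
    intro w hw h hsum
    obtain ⟨u', hd, hu', hle, hsum'⟩ := step_lemma hu hw h (by omega)
    obtain ⟨f, hf0, hfn, hstep⟩ := ih u' hu' hle (by omega)
    refine ⟨fun i => if i = 0 then w else f (i - 1), rfl, by simp [hfn], ?_⟩
    intro i hi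
    rcases Nat.eq_zero_or_pos i with h0 | h0
    · subst h0; simpa [hf0] using hd
    · have : i ≠ 0 := by omega
      simp only [this, if_false, Nat.add_eq_zero, if_neg (by omega : ¬ (i + 1 = 0))]
      have : i + 1 - 1 = (i - 1) + 1 := by omega
      rw [this]
      exact hstep (i - 1) (by omega)

lemma compLE_refl (u : List ℕ) : CompLE u u := ⟨u, List.Sublist.refl u, List.forall₂_refl u⟩

lemma chain_compLE : ∀ (m : ℕ) (f : ℕ → List ℕ),
    (∀ i < m, ElemDel (f i) (f (i + 1))) → CompLE (f m) (f 0) := by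
  intro m
  induction m with
  | zero => intro f _; exact compLE_refl _
  | succ n ih =>
    intro f hstep
    have h1 : CompLE (f (n + 1)) (f 1) := ih (fun i => f (i + 1))
      (fun i hi => hstep (i + 1) (by omega))
    exact compLE_trans h1 (elemDel_compLE (hstep 0 (by omega)))

theorem cont_iff_elem_deletions (u w : List ℕ) (hu : IsComposition u) (hw : IsComposition w) :
    (CompLE u w →
      ∃ f : ℕ → List ℕ, f 0 = w ∧ f (w.sum - u.sum) = u ∧
        ∀ i < w.sum - u.sum, ElemDel (f i) (f (i + 1))) ∧
    (∀ (m : ℕ) (f : ℕ → List ℕ), f 0 = w → f m = u →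
      (∀ i < m, ElemDel (f i) (f (i + 1))) → CompLE u w) := by
  constructor
  · intro h
    have hle : u.sum ≤ w.sum := by
      obtain ⟨v, hs, hf⟩ := h
      have := forall₂_sum_le hf
      have := hs.sum_le_sum (fun x _ => Nat.zero_le x)
      omega
    exact main_fwd u hu (w.sum - u.sum) w hw h (by omega)
  · intro m f h0 hm hstep
    have := chain_compLE m f hstep
    rwa [h0, hm] at this
end

section
/- Let w be a composition of n ≥ 3k+1. Then w has at least k entries equal to 1 if and only if either (1) 1^{n−k} is a k-deletion of w, or (2) w has a k-deletion of length |w| and also a k-deletion of length |w| − k (equivalently, the longest k-deletion of w is k letters longer than the shortest k-deletion of w). -/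
/-- Key counting lemma for sublists of compositions. -/
lemma lemA {v w : List ℕ} (h : v.Sublist w) :
    (∀ x ∈ w, 1 ≤ x) →
    2 * w.length + v.sum + v.count 1 ≤ 2 * v.length + w.sum + w.count 1 := by
  induction h with
  | slnil => simp
  | @cons l₁ l₂ a h ih =>
    intro hw
    have ha : 1 ≤ a := hw a (List.mem_cons_self)
    have ih' := ih (fun x hx => hw x (List.mem_cons_of_mem _ hx))
    simp only [List.count_cons, List.length_cons, List.sum_cons]
    by_cases h1 : a = 1 <;> simp [h1] <;> omega
  | @cons_cons l₁ l₂ a h ih =>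
    intro hw
    have ih' := ih (fun x hx => hw x (List.mem_cons_of_mem _ hx))
    simp only [List.count_cons, List.length_cons, List.sum_cons]
    by_cases h1 : a = 1 <;> simp [h1] <;> omega

lemma forall2_le_sum {u v : List ℕ} (h : List.Forall₂ (· ≤ ·) u v) : u.sum ≤ v.sum := by
  induction h with
  | nil => simp
  | cons h _ ih => simp only [List.sum_cons]; omega

lemma forall2_le_length {u v : List ℕ} (h : List.Forall₂ (· ≤ ·) u v) :
    u.length = v.length := h.length_eq

lemma length_le_sum {w : List ℕ} (hw : ∀ x ∈ w, 1 ≤ x) : w.length ≤ w.sum := by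
  have h1 := lemA (List.nil_sublist w) hw
  have h2 : List.count 1 w ≤ w.length := List.count_le_length
  simp only [List.length_nil, List.sum_nil, List.count_nil] at h1
  omega

lemma rep_le (l : List ℕ) (h : ∀ x ∈ l, 1 ≤ x) :
    List.Forall₂ (· ≤ ·) (List.replicate l.length 1) l := by
  induction l with
  | nil => simp
  | cons a t ih =>
    simp only [List.length_cons, List.replicate_succ]
    exact List.Forall₂.cons (h a (List.mem_cons_self))
      (ih (fun x hx => h x (List.mem_cons_of_mem _ hx)))

/-- Remove `k` ones from `w`. -/
def rem1 : ℕ → List ℕ → List ℕ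
  | 0, w => w
  | _+1, [] => []
  | k+1, a :: t => if a = 1 then rem1 k t else a :: rem1 (k+1) t

lemma rem1_sublist : ∀ k w, (rem1 k w).Sublist w
  | 0, w => by simp [rem1]
  | _+1, [] => by simp [rem1]
  | k+1, a :: t => by
    simp only [rem1]
    split
    · exact (rem1_sublist k t).cons a
    · exact (rem1_sublist (k+1) t).cons₂ a

lemma rem1_spec : ∀ k w, k ≤ w.count 1 →
    (rem1 k w).sum + k = w.sum ∧ (rem1 k w).length + k = w.length
  | 0, w => by simp [rem1]
  | k+1, [] => by simp
  | k+1, a :: t => by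
    intro h
    simp only [List.count_cons] at h
    simp only [rem1]
    by_cases ha : a = 1
    · subst ha
      have := rem1_spec k t (by simp at h; omega)
      rw [if_pos rfl]
      simp only [List.sum_cons, List.length_cons]
      omega
    · simp only [if_neg ha, List.sum_cons, List.length_cons]
      have := rem1_spec (k+1) t (by simp [ha] at h; omega)
      omega

/-- Reduce the entries of `w` greedily by a total of `k`, keeping them positive. -/
def reduce : ℕ → List ℕ → List ℕ
  | _, [] => []
  | k, a :: t => (a - min k (a - 1)) :: reduce (k - min k (a - 1)) t

lemma reduce_forall2 : ∀ k w, List.Forall₂ (· ≤ ·) (reduce k w) w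
  | _, [] => by simp [reduce]
  | k, a :: t => by
    simp only [reduce]
    exact List.Forall₂.cons (Nat.sub_le _ _) (reduce_forall2 _ t)

lemma reduce_comp : ∀ k w, (∀ x ∈ w, 1 ≤ x) → ∀ x ∈ reduce k w, 1 ≤ x
  | _, [], _ => by simp [reduce]
  | k, a :: t, hw => by
    simp only [reduce, List.mem_cons]
    rintro x (rfl | hx)
    · have : 1 ≤ a := hw a (List.mem_cons_self)
      omega
    · exact reduce_comp _ t (fun x hx => hw x (List.mem_cons_of_mem _ hx)) x hx

lemma reduce_sum : ∀ k w, (∀ x ∈ w, 1 ≤ x) → k + w.length ≤ w.sum →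
    (reduce k w).sum + k = w.sum
  | k, [], _ => by
    intro hk
    simp only [reduce, List.sum_nil, List.length_nil] at hk ⊢
    omega
  | k, a :: t, hw => by
    intro hk
    have ha : 1 ≤ a := hw a (List.mem_cons_self)
    have ht : ∀ x ∈ t, 1 ≤ x := fun x hx => hw x (List.mem_cons_of_mem _ hx)
    have hlt := length_le_sum ht
    simp only [List.sum_cons, List.length_cons] at hk ⊢
    simp only [reduce, List.sum_cons]
    have hih := reduce_sum (k - min k (a - 1)) t ht (by omega)
    omega

theorem determine_at_least_k_ones (k n : ℕ) (w : List ℕ) (hw : IsComposition w)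
    (hn : w.sum = n) (h : 3 * k + 1 ≤ n) :
    k ≤ w.count 1 ↔
      (List.replicate (n - k) 1 ∈ kDel k w ∨
        ((∃ u ∈ kDel k w, u.length = w.length) ∧
          ∃ u ∈ kDel k w, u.length + k = w.length)) := by
  constructor
  · intro hk
    by_cases hc : n - k ≤ w.length
    · left
      refine ⟨fun x hx => ?_, ⟨w.take (n - k), List.take_sublist _ _, ?_⟩, ?_⟩
      · rw [List.eq_of_mem_replicate hx]
      · have hcomp : ∀ x ∈ w.take (n - k), 1 ≤ x :=
          fun x hx => hw x ((List.take_sublist _ _).subset hx)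
        have := rep_le _ hcomp
        rwa [List.length_take, Nat.min_eq_left hc] at this
      · simp [hn]; omega
    · right
      push_neg at hc
      have hks : k + w.length ≤ w.sum := by omega
      constructor
      · exact ⟨reduce k w, ⟨reduce_comp k w hw, ⟨w, List.Sublist.refl w, reduce_forall2 k w⟩,
          reduce_sum k w hw hks⟩, (reduce_forall2 k w).length_eq⟩
      · exact ⟨rem1 k w, ⟨fun x hx => hw x ((rem1_sublist k w).subset hx),
          ⟨rem1 k w, rem1_sublist k w, List.forall₂_same.mpr (fun x _ => le_refl x)⟩,
          (rem1_spec k w hk).1⟩, (rem1_spec k w hk).2⟩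
  · rintro (⟨_, ⟨v, hv, hf⟩, _⟩ | ⟨_, u, ⟨_, ⟨v, hv, hf⟩, husum⟩, hlen⟩)
    · have hlv := hf.length_eq
      rw [List.length_replicate] at hlv
      have h1 := lemA (List.nil_sublist w) hw
      simp only [List.length_nil, List.sum_nil, List.count_nil] at h1
      have h2 := hv.length_le
      omega
    · have h1 := lemA hv hw
      have h2 := forall2_le_sum hf
      have h3 := hf.length_eq
      omega
end

section
/- Let w be a composition of n ≥ 3k+1 with fewer than k entries equal to 1, and set t = ex(w) − k (so t ≥ 1). Then w cannot have two distinct positions i ≠ j with w(i) > t+1 and w(j) ≥ t+1. Equivalently: at most one entry of w exceeds t, or exactly one entry exceeds t+1 and no other entry is ≥ t+1. -/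
lemma pair_sublist (w : List ℕ) (i j : ℕ) (hij : i < j) (hj : j < w.length) :
    List.Sublist [w[i]'(hij.trans hj), w[j]] w := by
  have h1 : w = w.take (i+1) ++ w.drop (i+1) := (List.take_append_drop _ _).symm
  have hi' : i < (w.take (i+1)).length := by
    simp [List.length_take]; omega
  have e1 : (w.take (i+1))[i]'hi' = w[i]'(hij.trans hj) := by simp
  have hj' : j - (i+1) < (w.drop (i+1)).length := by
    simp [List.length_drop]; omega
  have e2 : (w.drop (i+1))[j - (i+1)]'hj' = w[j] := by
    rw [List.getElem_drop]
    congr 1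
    omega
  have s1 : List.Sublist [w[i]'(hij.trans hj)] (w.take (i+1)) := by
    rw [List.singleton_sublist, ← e1]; exact List.getElem_mem _
  have s2 : List.Sublist [w[j]] (w.drop (i+1)) := by
    rw [List.singleton_sublist, ← e2]; exact List.getElem_mem _
  have := List.Sublist.append s1 s2
  simpa using this.trans (by rw [← h1])

lemma count_sum_bound (l : List ℕ) (hl : ∀ x ∈ l, 1 ≤ x) :
    2 * l.length ≤ l.sum + l.count 1 := by
  induction l with
  | nil => simp
  | cons a l ih =>
    have ha := hl a List.mem_cons_self
    have ih' := ih (fun x hx => hl x (List.mem_cons_of_mem a hx))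
    rw [List.count_cons]
    by_cases h : a = 1 <;> simp [h, List.sum_cons] <;> omega

theorem few_ones_at_most_one_big_entry (k n t : ℕ) (w : List ℕ) (hw : IsComposition w)
    (hn : w.sum = n) (h : 3 * k + 1 ≤ n) (h1 : w.count 1 < k)
    (ht : t = w.sum - w.length - k) :
    ¬∃ i j : Fin w.length, i ≠ j ∧ t + 2 ≤ w.get i ∧ t + 1 ≤ w.get j := by
  -- basic facts
  have hcl : w.count 1 ≤ w.length := List.count_le_length
  have hbound := count_sum_bound w hw
  have hS : 3 * k + 1 ≤ w.sum := by omega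
  -- ex = sum - length ≥ k+1
  have hex : w.length + k + 1 ≤ w.sum := by omega
  have htk : w.sum = w.length + k + t := by omega
  have ht1 : 1 ≤ t := by omega
  rintro ⟨i, j, hij, hi, hj⟩
  -- get a pair sublist with a + b ≥ 2t+3, both ≥ 2
  obtain ⟨a, b, hab, ha2, hb2, hsub⟩ :
      ∃ a b, 2 * t + 3 ≤ a + b ∧ 2 ≤ a ∧ 2 ≤ b ∧ List.Sublist [a, b] w := by
    rcases lt_or_gt_of_ne (fun e => hij (Fin.ext e) : (i:ℕ) ≠ j) with hlt | hlt
    · exact ⟨w.get i, w.get j, by omega, by omega, by omega,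
        by simpa using pair_sublist w i j hlt j.isLt⟩
    · exact ⟨w.get j, w.get i, by omega, by omega, by omega,
        by simpa using pair_sublist w j i hlt i.isLt⟩
  obtain ⟨l, hperm⟩ := hsub.exists_perm_append
  have hsum : w.sum = a + b + l.sum := by
    rw [hperm.sum_eq]; simp; omega
  have hlen : w.length = 2 + l.length := by
    rw [hperm.length_eq]; simp; omega
  have hcount : w.count 1 = l.count 1 := by
    have ha1 : a ≠ 1 := by omega
    have hb1 : b ≠ 1 := by omega
    rw [hperm.count_eq]
    simp [List.count_append, List.count_cons, ha1, hb1]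
  have hl : ∀ x ∈ l, 1 ≤ x := by
    intro x hx
    exact hw x (hperm.mem_iff.mpr (by simp [hx]))
  have hb := count_sum_bound l hl
  omega
end

section
/- Every composition w of n ≥ 3k+1 with fewer than k entries equal to 1 is reconstructible from its set of k-deletions: if w and w' are two compositions of n ≥ 3k+1, each with fewer than k entries equal to 1, and they have the same set of k-deletions, then w = w'. -/
lemma aux_length_le_sum {l : List ℕ} (h : ∀ x ∈ l, 1 ≤ x) : l.length ≤ l.sum := by
  induction l with
  | nil => simp
  | cons a t ih =>
    have ha := h a (by simp)
    have ht := ih (fun x hx => h x (by simp [hx]))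
    simp only [List.length_cons, List.sum_cons]
    omega

lemma aux_count_one {l : List ℕ} (h : ∀ x ∈ l, 1 ≤ x) :
    2 * l.length ≤ l.sum + l.count 1 := by
  induction l with
  | nil => simp
  | cons a t ih =>
    have ha := h a (by simp)
    have ht := ih (fun x hx => h x (by simp [hx]))
    rcases eq_or_ne a 1 with rfl | hne
    · rw [List.count_cons_self]
      simp only [List.length_cons, List.sum_cons]
      omega
    · rw [List.count_cons_of_ne hne]
      simp only [List.length_cons, List.sum_cons]
      omega

lemma aux_le_length {u w : List ℕ} (h : CompLE u w) : u.length ≤ w.length := by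
  obtain ⟨v, hs, hf⟩ := h
  rw [hf.length_eq]
  exact hs.length_le

lemma aux_full_forall₂ {u w : List ℕ} (h : CompLE u w) (hlen : u.length = w.length) :
    List.Forall₂ (· ≤ ·) u w := by
  obtain ⟨v, hs, hf⟩ := h
  have h1 := hf.length_eq
  have h2 : v = w := hs.eq_of_length (by omega)
  rwa [h2] at hf

lemma aux_distribute : ∀ (b : List ℕ), (∀ x ∈ b, 1 ≤ x) → ∀ tot, b.length ≤ tot → tot ≤ b.sum →
    ∃ u : List ℕ, List.Forall₂ (· ≤ ·) u b ∧ (∀ x ∈ u, 1 ≤ x) ∧ u.sum = tot := by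
  intro b
  induction b with
  | nil =>
    intro _ tot h1 h2
    simp only [List.length_nil] at h1
    simp only [List.sum_nil] at h2
    exact ⟨[], List.Forall₂.nil, by simp, by simp; omega⟩
  | cons x bs ih =>
    intro hcomp tot h1 h2
    have hx : 1 ≤ x := hcomp x (by simp)
    have hbs : ∀ y ∈ bs, 1 ≤ y := fun y hy => hcomp y (by simp [hy])
    have hlen : bs.length ≤ bs.sum := aux_length_le_sum hbs
    simp only [List.length_cons] at h1
    simp only [List.sum_cons] at h2
    by_cases hc : tot ≤ bs.sum + 1
    · obtain ⟨u, hf, hcomp', hsum⟩ := ih hbs (tot - 1) (by omega) (by omega)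
      refine ⟨1 :: u, List.Forall₂.cons hx hf, ?_, ?_⟩
      · intro y hy
        rcases List.mem_cons.1 hy with rfl | hy'
        · exact le_refl 1
        · exact hcomp' y hy'
      · simp only [List.sum_cons]; omega
    · obtain ⟨u, hf, hcomp', hsum⟩ := ih hbs bs.sum (by omega) (by omega)
      refine ⟨(tot - bs.sum) :: u, List.Forall₂.cons (by omega) hf, ?_, ?_⟩
      · intro y hy
        rcases List.mem_cons.1 hy with rfl | hy'
        · omega
        · exact hcomp' y hy'
      · simp only [List.sum_cons]; omega

lemma aux_forall₂_append {x₁ y₁ : List ℕ} (x₂ y₂ : List ℕ)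
    (h1 : List.Forall₂ (· ≤ ·) x₁ y₁) (h2 : List.Forall₂ (· ≤ ·) x₂ y₂) :
    List.Forall₂ (· ≤ ·) (x₁ ++ x₂) (y₁ ++ y₂) := by
  induction h1 with
  | nil => simpa
  | cons hab _ ih => exact List.Forall₂.cons hab ih

lemma aux_forall₂_append_split : ∀ (y₁ : List ℕ) {u y₂ : List ℕ},
    List.Forall₂ (· ≤ ·) u (y₁ ++ y₂) →
    ∃ u₁ u₂, u = u₁ ++ u₂ ∧ List.Forall₂ (· ≤ ·) u₁ y₁ ∧ List.Forall₂ (· ≤ ·) u₂ y₂ := by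
  intro y₁
  induction y₁ with
  | nil => intro u y₂ h; exact ⟨[], u, rfl, List.Forall₂.nil, by simpa using h⟩
  | cons b s ih =>
    intro u y₂ h
    cases u with
    | nil => cases h
    | cons a u' =>
      cases h with
      | cons hab hf =>
        obtain ⟨u₁, u₂, heq, hf1, hf2⟩ := ih hf
        exact ⟨a :: u₁, u₂, by rw [heq]; rfl, List.Forall₂.cons hab hf1, hf2⟩

lemma aux_forall₂_append_inv : ∀ (x₁ y₁ : List ℕ) {x₂ y₂ : List ℕ},
    x₁.length = y₁.length → List.Forall₂ (· ≤ ·) (x₁ ++ x₂) (y₁ ++ y₂) →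
    List.Forall₂ (· ≤ ·) x₂ y₂ := by
  intro x₁
  induction x₁ with
  | nil =>
    intro y₁ x₂ y₂ hl hf
    cases y₁ with
    | nil => simpa using hf
    | cons b s => simp at hl
  | cons a t ih =>
    intro y₁ x₂ y₂ hl hf
    cases y₁ with
    | nil => simp at hl
    | cons b s =>
      cases hf with
      | cons _ hf' => exact ih s (by simpa using hl) hf'

lemma aux_zip_mem_split : ∀ {x y : List ℕ} {p : ℕ × ℕ}, p ∈ x.zip y →
    ∃ l r l' r', x = l ++ p.1 :: r ∧ y = l' ++ p.2 :: r' ∧ l.length = l'.length := by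
  intro x
  induction x with
  | nil => intro y p hp; simp [List.zip] at hp
  | cons a t ih =>
    intro y p hp
    cases y with
    | nil => simp [List.zip] at hp
    | cons b s =>
      rw [List.zip_cons_cons] at hp
      rcases List.mem_cons.1 hp with heq | hmem
      · subst heq
        exact ⟨[], t, [], s, rfl, rfl, rfl⟩
      · obtain ⟨l, r, l', r', hx, hy, hl⟩ := ih hmem
        exact ⟨a :: l, r, b :: l', r', by simp [hx], by simp [hy], by simp [hl]⟩

lemma aux_exists_lt : ∀ {x y : List ℕ}, x.length = y.length → x.sum < y.sum →
    ∃ p ∈ x.zip y, p.1 < p.2 := by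
  intro x
  induction x with
  | nil =>
    intro y hl hs
    cases y with
    | nil => simp at hs
    | cons b s => simp at hl
  | cons a t ih =>
    intro y hl hs
    cases y with
    | nil => simp at hl
    | cons b s =>
      by_cases hab : a < b
      · exact ⟨(a, b), by rw [List.zip_cons_cons]; simp, hab⟩
      · simp only [List.sum_cons] at hs
        obtain ⟨p, hp, hplt⟩ := ih (by simpa using hl) (by omega)
        exact ⟨p, by rw [List.zip_cons_cons]; exact List.mem_cons_of_mem _ hp, hplt⟩

lemma aux_exists_gt : ∀ {x y : List ℕ}, x.length = y.length → y.sum < x.sum →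
    ∃ p ∈ x.zip y, p.2 < p.1 := by
  intro x
  induction x with
  | nil =>
    intro y hl hs
    cases y with
    | nil => simp at hs
    | cons b s => simp at hl
  | cons a t ih =>
    intro y hl hs
    cases y with
    | nil => simp at hl
    | cons b s =>
      by_cases hab : b < a
      · exact ⟨(a, b), by rw [List.zip_cons_cons]; simp, hab⟩
      · simp only [List.sum_cons] at hs
        obtain ⟨p, hp, hplt⟩ := ih (by simpa using hl) (by omega)
        exact ⟨p, by rw [List.zip_cons_cons]; exact List.mem_cons_of_mem _ hp, hplt⟩

lemma aux_exists_both : ∀ {x y : List ℕ}, x.length = y.length → x.sum = y.sum → x ≠ y →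
    (∃ p ∈ x.zip y, p.1 < p.2) ∧ (∃ q ∈ x.zip y, q.2 < q.1) := by
  intro x
  induction x with
  | nil =>
    intro y hl _ hne
    cases y with
    | nil => exact absurd rfl hne
    | cons b s => simp at hl
  | cons a t ih =>
    intro y hl hs hne
    cases y with
    | nil => simp at hl
    | cons b s =>
      simp only [List.sum_cons] at hs
      rcases lt_trichotomy a b with hab | hab | hab
      · refine ⟨⟨(a, b), by rw [List.zip_cons_cons]; simp, hab⟩, ?_⟩
        obtain ⟨q, hq, hqgt⟩ := aux_exists_gt (x := t) (y := s) (by simpa using hl) (by omega)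
        exact ⟨q, by rw [List.zip_cons_cons]; exact List.mem_cons_of_mem _ hq, hqgt⟩
      · subst hab
        have hts : t ≠ s := by intro hts; exact hne (by rw [hts])
        obtain ⟨⟨p, hp, h1⟩, ⟨q, hq, h2⟩⟩ := ih (by simpa using hl) (by omega) hts
        exact ⟨⟨p, by rw [List.zip_cons_cons]; exact List.mem_cons_of_mem _ hp, h1⟩,
               ⟨q, by rw [List.zip_cons_cons]; exact List.mem_cons_of_mem _ hq, h2⟩⟩
      · refine ⟨?_, ⟨(a, b), by rw [List.zip_cons_cons]; simp, hab⟩⟩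
        obtain ⟨p, hp, hplt⟩ := aux_exists_lt (x := t) (y := s) (by simpa using hl) (by omega)
        exact ⟨p, by rw [List.zip_cons_cons]; exact List.mem_cons_of_mem _ hp, hplt⟩

lemma aux_coord_bound (k n m : ℕ) (w w' : List ℕ) (l r l' r' : List ℕ) (a b : ℕ)
    (hw : IsComposition w) (hw' : IsComposition w')
    (hnw : w.sum = n) (hnw' : w'.sum = n)
    (hmw : w.length = m) (hmw' : w'.length = m)
    (hdel : kDel k w = kDel k w')
    (hmk : m + k + 1 ≤ n)
    (hsw : w = l ++ a :: r) (hsw' : w' = l' ++ b :: r')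
    (hll : l.length = l'.length)
    (hab : a < b) : n + 1 ≤ a + k + m := by
  have hothers : ∀ x ∈ l' ++ r', 1 ≤ x := by
    intro x hx
    apply hw'
    rw [hsw']
    rcases List.mem_append.1 hx with h' | h'
    · exact List.mem_append.2 (Or.inl h')
    · exact List.mem_append.2 (Or.inr (List.mem_cons_of_mem _ h'))
  have hosum : (l' ++ r').sum + b = n := by
    rw [hsw'] at hnw'
    simp only [List.sum_append, List.sum_cons] at hnw' ⊢
    omega
  have holen : (l' ++ r').length + 1 = m := by
    rw [hsw'] at hmw'
    simp only [List.length_append, List.length_cons] at hmw' ⊢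
    omega
  have hls : (l' ++ r').length ≤ (l' ++ r').sum := aux_length_le_sum hothers
  have hb1 : 1 ≤ b := hw' b (by rw [hsw']; exact List.mem_append.2 (Or.inr List.mem_cons_self))
  set c := min b (n - k - (l' ++ r').length) with hcdef
  have hc1 : c ≤ b := min_le_left _ _
  have hc2 : c ≤ n - k - (l' ++ r').length := min_le_right _ _
  have hcge : 1 ≤ c := by
    have : 1 ≤ n - k - (l' ++ r').length := by omega
    exact le_min hb1 this
  have hchoice := min_choice b (n - k - (l' ++ r').length)
  rw [← hcdef] at hchoice
  have htot1 : (l' ++ r').length ≤ n - k - c := by omega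
  have htot2 : n - k - c ≤ (l' ++ r').sum := by
    rcases hchoice with hcb | hcc
    · omega
    · omega
  obtain ⟨u', hf', hcomp', hsum'⟩ := aux_distribute (l' ++ r') hothers (n - k - c) htot1 htot2
  obtain ⟨u₁, u₂, rfl, hf1, hf2⟩ := aux_forall₂_append_split l' hf'
  have hu1len : u₁.length = l'.length := hf1.length_eq
  have hu2len : u₂.length = r'.length := hf2.length_eq
  have husum : u₁.sum + u₂.sum = n - k - c := by
    simpa [List.sum_append] using hsum'
  have hukdel : (u₁ ++ c :: u₂) ∈ kDel k w' := by
    refine ⟨?_, ⟨w', List.Sublist.refl w', ?_⟩, ?_⟩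
    · intro x hx
      rcases List.mem_append.1 hx with h' | h'
      · exact hcomp' x (List.mem_append.2 (Or.inl h'))
      · rcases List.mem_cons.1 h' with rfl | h''
        · exact hcge
        · exact hcomp' x (List.mem_append.2 (Or.inr h''))
    · rw [hsw']
      exact aux_forall₂_append _ _ hf1 (List.Forall₂.cons hc1 hf2)
    · rw [hnw']
      simp only [List.sum_append, List.sum_cons]
      omega
  have hukdelw : (u₁ ++ c :: u₂) ∈ kDel k w := by rw [hdel]; exact hukdel
  have hulen : (u₁ ++ c :: u₂).length = w.length := by
    simp only [List.length_append, List.length_cons]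
    rw [hmw, hu1len, hu2len]
    rw [hsw'] at hmw'
    simp only [List.length_append, List.length_cons] at hmw'
    omega
  have hfull := aux_full_forall₂ hukdelw.2.1 hulen
  rw [hsw] at hfull
  have hca : List.Forall₂ (· ≤ ·) (c :: u₂) (a :: r) :=
    aux_forall₂_append_inv u₁ l (by rw [hu1len, hll]) hfull
  have hcla : c ≤ a := by cases hca with | cons h _ => exact h
  rcases hchoice with hcb | hcc
  · omega
  · omega

lemma aux_two_mem_perm {α : Type} {p q : α} : ∀ {z : List α}, p ∈ z → q ∈ z → p ≠ q →
    ∃ zz, z.Perm (p :: q :: zz) := by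
  intro z
  induction z with
  | nil => intro hp _ _; cases hp
  | cons a t ih =>
    intro hp hq hpq
    rcases List.mem_cons.1 hp with rfl | hpt
    · have hqt : q ∈ t := by
        rcases List.mem_cons.1 hq with h' | h'
        · exact absurd h'.symm hpq
        · exact h'
      obtain ⟨s1, s2, rfl⟩ := List.append_of_mem hqt
      exact ⟨s1 ++ s2, List.Perm.cons p List.perm_middle⟩
    · rcases List.mem_cons.1 hq with rfl | hqt
      · obtain ⟨s1, s2, rfl⟩ := List.append_of_mem hpt
        refine ⟨s1 ++ s2, ?_⟩
        have h1 : (q :: (s1 ++ p :: s2)).Perm (q :: p :: (s1 ++ s2)) :=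
          List.Perm.cons q List.perm_middle
        exact h1.trans (List.Perm.swap p q _)
      · obtain ⟨zz, hzz⟩ := ih hpt hqt hpq
        refine ⟨a :: zz, ?_⟩
        have h1 : (a :: t).Perm (a :: p :: q :: zz) := List.Perm.cons a hzz
        have h2 : (a :: p :: q :: zz).Perm (p :: a :: q :: zz) := List.Perm.swap p a _
        have h3 : (p :: a :: q :: zz).Perm (p :: q :: a :: zz) :=
          List.Perm.cons p (List.Perm.swap q a _)
        exact (h1.trans h2).trans h3


theorem reconstruct_few_ones (k n : ℕ) (w w' : List ℕ)
    (hw : IsComposition w) (hw' : IsComposition w')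
    (hnw : w.sum = n) (hnw' : w'.sum = n) (h : 3 * k + 1 ≤ n)
    (h1 : w.count 1 < k) (h1' : w'.count 1 < k)
    (hdel : kDel k w = kDel k w') : w = w' := by
  by_contra hne
  have h2w : 2 * w.length ≤ n + w.count 1 := by
    have := aux_count_one hw
    omega
  have h2w' : 2 * w'.length ≤ n + w'.count 1 := by
    have := aux_count_one hw'
    omega
  have hmn : w.length + k + 1 ≤ n := by omega
  have hmn' : w'.length + k + 1 ≤ n := by omega
  -- lengths are equal
  have hlen_le : w.length ≤ w'.length := by
    obtain ⟨u0, hf0, hc0, hs0⟩ := aux_distribute w hw (n - k) (by omega) (by omega)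
    have hu0 : u0 ∈ kDel k w := ⟨hc0, ⟨w, List.Sublist.refl w, hf0⟩, by omega⟩
    have hu0' : u0 ∈ kDel k w' := by rw [← hdel]; exact hu0
    have h2 : u0.length ≤ w'.length := aux_le_length hu0'.2.1
    have h3 : u0.length = w.length := hf0.length_eq
    omega
  have hlen_le' : w'.length ≤ w.length := by
    obtain ⟨u0, hf0, hc0, hs0⟩ := aux_distribute w' hw' (n - k) (by omega) (by omega)
    have hu0 : u0 ∈ kDel k w' := ⟨hc0, ⟨w', List.Sublist.refl w', hf0⟩, by omega⟩
    have hu0' : u0 ∈ kDel k w := by rw [hdel]; exact hu0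
    have h2 : u0.length ≤ w.length := aux_le_length hu0'.2.1
    have h3 : u0.length = w'.length := hf0.length_eq
    omega
  have hlen_eq : w.length = w'.length := le_antisymm hlen_le hlen_le'
  obtain ⟨⟨p, hp, hplt⟩, ⟨q, hq, hqgt⟩⟩ :=
    aux_exists_both hlen_eq (by rw [hnw, hnw']) hne
  obtain ⟨l, r, l', r', hx, hy, hl⟩ := aux_zip_mem_split hp
  have hpa : n + 1 ≤ p.1 + k + w.length :=
    aux_coord_bound k n w.length w w' l r l' r' p.1 p.2 hw hw' hnw hnw' rfl hlen_eq.symm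
      hdel hmn hx hy hl hplt
  obtain ⟨l2, r2, l2', r2', hx2, hy2, hl2⟩ := aux_zip_mem_split hq
  have hqb : n + 1 ≤ q.2 + k + w.length :=
    aux_coord_bound k n w.length w' w l2' r2' l2 r2 q.2 q.1 hw' hw hnw' hnw hlen_eq.symm rfl
      hdel.symm hmn hy2 hx2 hl2.symm hqgt
  -- extract the two coordinates via a permutation
  have hpq : p ≠ q := by
    intro hEq
    rw [hEq] at hplt
    omega
  set z := w.zip w' with hzdef
  obtain ⟨zz, hperm⟩ := aux_two_mem_perm hp hq hpq
  have hzmap : z.map Prod.fst = w := List.map_fst_zip (le_of_eq hlen_eq)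
  have hwperm : w.Perm (p.1 :: q.1 :: zz.map Prod.fst) := by
    have := hperm.map Prod.fst
    rw [hzmap] at this
    simpa using this
  set rest := zz.map Prod.fst with hrdef
  have hrest_comp : ∀ x ∈ rest, 1 ≤ x := by
    intro x hx
    exact hw x (hwperm.mem_iff.mpr (by simp [hx]))
  have hrest_cnt := aux_count_one hrest_comp
  have hsum2 : n = p.1 + q.1 + rest.sum := by
    have := hwperm.sum_eq
    simp only [List.sum_cons] at this
    omega
  have hlen2 : w.length = 2 + rest.length := by
    rw [hwperm.length_eq]
    simp only [List.length_cons]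
    omega
  have hp1ne : p.1 ≠ 1 := by omega
  have hq1ne : q.1 ≠ 1 := by omega
  have hcnt : w.count 1 = rest.count 1 := by
    rw [hwperm.count_eq]
    rw [List.count_cons_of_ne hp1ne, List.count_cons_of_ne hq1ne]
  omega
end

section
/- Every composition w of n ≥ 3k+1 with exactly k entries equal to 1 is reconstructible from its set of k-deletions: if w and w' are compositions of n ≥ 3k+1, each with exactly k entries equal to 1, having the same set of k-deletions, then w = w'. -/
open List

/-- The predicate "not equal to one" on naturals (as a Bool). -/
def notOne (x : ℕ) : Bool := x ≠ 1

lemma notOne_iff (x : ℕ) : notOne x = true ↔ x ≠ 1 := by simp [notOne]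

/-- Interpolation: given pointwise `a ≤ b` and a target sum between the sums,
there is a pointwise intermediate list with that sum. -/
lemma interp : ∀ {a b : List ℕ}, Forall₂ (· ≤ ·) a b → ∀ s, a.sum ≤ s → s ≤ b.sum →
    ∃ c : List ℕ, Forall₂ (· ≤ ·) a c ∧ Forall₂ (· ≤ ·) c b ∧ c.sum = s := by
  intro a b h
  induction h with
  | nil =>
    intro s h1 h2
    refine ⟨[], .nil, .nil, ?_⟩
    simp only [List.sum_nil] at h2 ⊢
    omega
  | @cons x y as bs hxy hab ih =>
    intro s h1 h2
    simp only [List.sum_cons] at h1 h2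
    have hsum : as.sum ≤ bs.sum := by
      clear h1 h2 hxy ih
      induction hab with
      | nil => simp
      | cons h _ ih => simp only [List.sum_cons]; omega
    obtain ⟨c, hac, hcb, hcs⟩ := ih (s - min y (s - as.sum)) (by omega) (by omega)
    exact ⟨min y (s - as.sum) :: c, .cons (by omega) hac, .cons (by omega) hcb,
      by simp only [List.sum_cons]; omega⟩

lemma two_len_le : ∀ (w : List ℕ), IsComposition w → 2 * w.length ≤ w.sum + w.count 1 := by
  intro w
  induction w with
  | nil => simp
  | cons x xs ih =>
    intro hw
    have hx : 1 ≤ x := hw x (by simp)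
    have hxs := ih (fun y hy => hw y (by simp [hy]))
    by_cases h1 : x = 1 <;>
      simp [List.count_cons, h1] <;> omega

lemma forall₂_le_antisymm : ∀ {l m : List ℕ}, Forall₂ (· ≤ ·) l m → Forall₂ (· ≤ ·) m l →
    l = m := by
  intro l m h1
  induction h1 with
  | nil => intro; rfl
  | cons hab h ih =>
    intro h2
    rcases h2 with _ | ⟨hba, h2⟩
    rw [Nat.le_antisymm hab hba, ih h2]

lemma forall₂_ge_two : ∀ {l m : List ℕ}, Forall₂ (· ≤ ·) l m → (∀ x ∈ l, 2 ≤ x) →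
    ∀ y ∈ m, notOne y = true := by
  intro l m h
  induction h with
  | nil => simp
  | @cons a b l m hab h ih =>
    intro hl y hy
    rcases List.mem_cons.mp hy with rfl | hy
    · have := hl a (by simp)
      rw [notOne_iff]
      omega
    · exact ih (fun x hx => hl x (by simp [hx])) y hy

lemma rebuild : ∀ {w w' : List ℕ}, Forall₂ (fun a b => a = 1 ↔ b = 1) w w' →
    w.filter notOne = w'.filter notOne → w = w' := by
  intro w w' h
  induction h with
  | nil => intro; rfl
  | @cons a b l l' hab h ih =>
    intro hf
    by_cases ha : a = 1
    · have hb : b = 1 := hab.mp ha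
      rw [List.filter_cons_of_neg (by rw [notOne_iff]; simpa using ha),
        List.filter_cons_of_neg (by rw [notOne_iff]; simpa using hb)] at hf
      rw [ha, hb, ih hf]
    · have hb : b ≠ 1 := fun hh => ha (hab.mpr hh)
      rw [List.filter_cons_of_pos (by rw [notOne_iff]; exact ha),
        List.filter_cons_of_pos (by rw [notOne_iff]; exact hb)] at hf
      injection hf with h1 h2
      rw [h1, ih h2]

lemma filter_ones_stats : ∀ (l : List ℕ),
    (l.filter notOne).sum + l.count 1 = l.sum ∧
    (l.filter notOne).length + l.count 1 = l.length := by
  intro l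
  induction l with
  | nil => simp
  | cons x xs ih =>
    by_cases hx : x = 1
    · rw [List.filter_cons_of_neg (by rw [notOne_iff]; simpa using hx)]
      simp only [List.count_cons, List.sum_cons, List.length_cons, hx]
      simp
      omega
    · rw [List.filter_cons_of_pos (by rw [notOne_iff]; exact hx)]
      simp only [List.count_cons, List.sum_cons, List.length_cons, hx]
      simp [hx]
      omega

lemma sum_set_nat : ∀ (l : List ℕ) (i : ℕ) (x : ℕ) (h : i < l.length),
    (l.set i x).sum + l.get ⟨i, h⟩ = l.sum + x := by
  intro l
  induction l with
  | nil => intro i x h; simp at h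
  | cons a as ih =>
    intro i x h
    cases i with
    | zero => simp [List.set]; omega
    | succ j =>
      have hj : j < as.length := by simpa using h
      have := ih j x hj
      simp only [List.set, List.sum_cons, List.get_cons_succ]
      omega

/-- Key length bound: `w.length + k + 1 ≤ w.sum`. -/
lemma length_bound {k n : ℕ} {w : List ℕ} (hw : IsComposition w) (hnw : w.sum = n)
    (h : 3 * k + 1 ≤ n) (h1 : w.count 1 = k) : w.length + k + 1 ≤ n := by
  have := two_len_le w hw
  omega

/-- There is a full-length `k`-deletion. -/
lemma exists_full_length {k n : ℕ} {w : List ℕ} (hw : IsComposition w) (hnw : w.sum = n)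
    (h : 3 * k + 1 ≤ n) (h1 : w.count 1 = k) :
    ∃ u ∈ kDel k w, u.length = w.length := by
  have hlen := length_bound hw hnw h h1
  have hrep : Forall₂ (· ≤ ·) (List.replicate w.length 1) w := by
    rw [List.forall₂_iff_get]
    refine ⟨by simp, fun i hi1 hi2 => ?_⟩
    simp only [List.get_eq_getElem, List.getElem_replicate]
    exact hw _ (List.get_mem w ⟨_, hi2⟩)
  obtain ⟨c, hac, hcw, hcs⟩ := interp hrep (n - k) (by simp; omega) (by omega)
  refine ⟨c, ⟨?_, ⟨w, List.Sublist.refl w, hcw⟩, by omega⟩, ?_⟩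
  · intro x hx
    rw [List.forall₂_iff_get] at hac
    obtain ⟨i, hi, rfl⟩ := List.get_of_mem hx
    have := hac.2 i (by omega) i.2
    simpa using this
  · exact hcw.length_eq

/-- From one inclusion of deletion sets, lengths compare. -/
lemma length_le {k n : ℕ} {w w' : List ℕ} (hw : IsComposition w) (hnw : w.sum = n)
    (h : 3 * k + 1 ≤ n) (h1 : w.count 1 = k) (hsub : kDel k w ⊆ kDel k w') :
    w.length ≤ w'.length := by
  obtain ⟨u, hu, hlen⟩ := exists_full_length hw hnw h h1
  obtain ⟨_, ⟨v, hvsub, hf⟩, _⟩ := hsub hu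
  calc w.length = u.length := hlen.symm
    _ = v.length := hf.length_eq
    _ ≤ w'.length := hvsub.length_le

/-- A full-length element of `kDel k w'` is pointwise `≤ w'`. -/
lemma full_length_forall₂ {k : ℕ} {u w' : List ℕ} (hu : u ∈ kDel k w')
    (hlen : u.length = w'.length) : Forall₂ (· ≤ ·) u w' := by
  obtain ⟨_, ⟨v, hvsub, hf⟩, _⟩ := hu
  have hv : v = w' := hvsub.eq_of_length (by rw [← hf.length_eq, hlen])
  rwa [hv] at hf

/-- Big entries (entries ≠ 1) compare pointwise. -/
lemma bigs_le {k n : ℕ} {w w' : List ℕ} (hw : IsComposition w) (hw' : IsComposition w')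
    (hnw : w.sum = n) (hnw' : w'.sum = n)
    (h1 : w.count 1 = k) (h1' : w'.count 1 = k) (hL : w.length = w'.length)
    (hsub : kDel k w ⊆ kDel k w') :
    Forall₂ (· ≤ ·) (w.filter notOne) (w'.filter notOne) := by
  obtain ⟨hs, hl⟩ := filter_ones_stats w
  obtain ⟨hs', hl'⟩ := filter_ones_stats w'
  have hu0two : ∀ x ∈ w.filter notOne, 2 ≤ x := by
    intro x hx
    rw [List.mem_filter, notOne_iff] at hx
    have := hw x hx.1
    omega
  have hu0mem : w.filter notOne ∈ kDel k w := by
    refine ⟨fun x hx => by have := hu0two x hx; omega,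
      ⟨w.filter notOne, List.filter_sublist, ?_⟩, by omega⟩
    exact List.forall₂_iff_get.mpr ⟨rfl, fun i ha hb => le_refl _⟩
  obtain ⟨_, ⟨v, hvsub, hf⟩, _⟩ := hsub hu0mem
  have hvfil : v.filter notOne = v :=
    List.filter_eq_self.mpr (forall₂_ge_two hf hu0two)
  have hvsub' : v <+ w'.filter notOne := by
    rw [← hvfil]; exact hvsub.filter _
  have hveq : v = w'.filter notOne := by
    apply hvsub'.eq_of_length
    have := hf.length_eq
    omega
  rwa [hveq] at hf

/-- If `w i ≥ 2` then `w' i ≥ 2`. -/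
lemma big_pos {k n : ℕ} {w w' : List ℕ} (hw : IsComposition w)
    (hnw : w.sum = n) (hnw' : w'.sum = n) (h : 3 * k + 1 ≤ n)
    (h1 : w.count 1 = k) (hL : w.length = w'.length)
    (hsub : kDel k w ⊆ kDel k w')
    (i : ℕ) (hi : i < w.length) (hi' : i < w'.length)
    (hbig : w.get ⟨i, hi⟩ ≠ 1) : w'.get ⟨i, hi'⟩ ≠ 1 := by
  have hlen := length_bound hw hnw h h1
  have hget : ∀ (j : ℕ) (hj : j < ((List.replicate w.length 1).set i 2).length),
      ((List.replicate w.length 1).set i 2)[j] = if i = j then 2 else 1 := by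
    intro j hj
    rw [List.getElem_set]
    split <;> simp [List.getElem_replicate]
  have halen : ((List.replicate w.length 1).set i 2).length = w.length := by simp
  have hasum : ((List.replicate w.length 1).set i 2).sum = w.length + 1 := by
    have := sum_set_nat (List.replicate w.length 1) i 2 (by simpa using hi)
    simp only [List.get_eq_getElem, List.getElem_replicate, List.sum_replicate, smul_eq_mul, mul_one] at this
    omega
  have haw : Forall₂ (· ≤ ·) ((List.replicate w.length 1).set i 2) w := by
    rw [List.forall₂_iff_get]
    refine ⟨by rw [halen], fun j hj1 hj2 => ?_⟩
    have hga := hget j hj1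
    simp only [List.get_eq_getElem] at hga ⊢
    rw [hga]
    by_cases hij : i = j
    · subst hij
      have h2 := hw _ (List.get_mem w ⟨i, hi⟩)
      have hne : w[i] ≠ 1 := hbig
      rw [if_pos rfl]
      have : w[i] = w.get ⟨i, hi⟩ := rfl
      omega
    · simp only [if_neg hij]
      exact hw _ (List.get_mem w ⟨j, hj2⟩)
  obtain ⟨c, hac, hcw, hcs⟩ := interp haw (n - k) (by omega) (by omega)
  have hcmem : c ∈ kDel k w := by
    refine ⟨?_, ⟨w, List.Sublist.refl w, hcw⟩, by omega⟩
    intro x hx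
    obtain ⟨j, hj, rfl⟩ := List.get_of_mem hx
    rw [List.forall₂_iff_get] at hac
    have hle := hac.2 j (by omega) j.2
    have hga := hget j (by omega)
    simp only [List.get_eq_getElem] at hle
    rw [hga] at hle
    by_cases hij : i = (j : ℕ)
    · rw [if_pos hij] at hle
      simp only [List.get_eq_getElem]
      omega
    · rw [if_neg hij] at hle
      simp only [List.get_eq_getElem]
      omega
  have hcu := hsub hcmem
  have hclen : c.length = w'.length := by rw [← hL, ← hac.length_eq, halen]
  have hcw' := full_length_forall₂ hcu hclen
  rw [List.forall₂_iff_get] at hcw' hac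
  have hle := hcw'.2 i (by omega) hi'
  have hge := hac.2 i (by rw [halen]; omega) (by omega)
  have hga := hget i (by rw [halen]; omega)
  simp only [List.get_eq_getElem] at hle hge ⊢
  rw [hga, if_pos rfl] at hge
  omega

theorem reconstruct_exactly_k_ones (k n : ℕ) (w w' : List ℕ)
    (hw : IsComposition w) (hw' : IsComposition w')
    (hnw : w.sum = n) (hnw' : w'.sum = n) (h : 3 * k + 1 ≤ n)
    (h1 : w.count 1 = k) (h1' : w'.count 1 = k)
    (hdel : kDel k w = kDel k w') : w = w' := by
  have hsub1 : kDel k w ⊆ kDel k w' := hdel.le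
  have hsub2 : kDel k w' ⊆ kDel k w := hdel.ge
  have hL : w.length = w'.length :=
    le_antisymm (length_le hw hnw h h1 hsub1) (length_le hw' hnw' h h1' hsub2)
  have hB1 := bigs_le hw hw' hnw hnw' h1 h1' hL hsub1
  have hB2 := bigs_le hw' hw hnw' hnw h1' h1 hL.symm hsub2
  have hfil : w.filter notOne = w'.filter notOne := forall₂_le_antisymm hB1 hB2
  apply rebuild _ hfil
  rw [List.forall₂_iff_get]
  refine ⟨hL, fun i hi1 hi2 => ?_⟩
  constructor
  · intro hone
    by_contra hne
    exact (big_pos hw' hnw' hnw h h1' hL.symm hsub2 i hi2 hi1 hne) hone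
  · intro hone
    by_contra hne
    exact (big_pos hw hnw hnw' h h1 hL hsub1 i hi1 hi2 hne) hone
end

section
/- Let w be a composition with more than k entries equal to 1, whose entries ≥ 2 in order form v = v(1)···v(ℓ), so that w = 1^{z(1)} v(1) 1^{z(2)} v(2) ··· v(ℓ) 1^{z(ℓ+1)} for some z ∈ ℕ^{ℓ+1}. For 1 ≤ i ≤ ℓ+1, let a_i = 2^{i−1} 1 2^{ℓ+1−i} (length ℓ+1, a single 1 in position i). Then z(i) = 0 if and only if a_i is not contained in any k-deletion of w. -/
open List hiding interleave

/-- interleave z v = 1^{z 0} v 0 1^{z 1} v 1 ⋯ -/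
def interleave : List ℕ → List ℕ → List ℕ
  | z :: zs, x :: xs => List.replicate z 1 ++ x :: interleave zs xs
  | z :: _, [] => List.replicate z 1
  | [], _ => []

/-! ### auxiliary lemmas -/

def dzgC2 (l : List ℕ) : ℕ := l.countP (fun x => 2 ≤ x)

lemma dzg_sub_forall₂ {r : ℕ → ℕ → Prop} :
    ∀ {s u t : List ℕ}, s.Sublist u → Forall₂ r u t → ∃ t', t'.Sublist t ∧ Forall₂ r s t' := by
  intro s u t hsu
  induction hsu generalizing t with
  | slnil => intro h; cases h; exact ⟨[], Sublist.refl _, Forall₂.nil⟩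
  | cons a h ih =>
      intro hf
      cases hf with
      | cons hab hf' =>
        obtain ⟨t', ht', hf''⟩ := ih hf'
        exact ⟨t', ht'.trans (sublist_cons_self _ _), hf''⟩
  | cons_cons a h ih =>
      intro hf
      cases hf with
      | cons hab hf' =>
        obtain ⟨t', ht', hf''⟩ := ih hf'
        exact ⟨_ :: t', ht'.cons₂ _, Forall₂.cons hab hf''⟩

lemma dzg_f2_trans : ∀ {a s t : List ℕ},
    Forall₂ (· ≤ ·) a s → Forall₂ (· ≤ ·) s t → Forall₂ (· ≤ ·) a t := by
  intro a s t h1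
  induction h1 generalizing t with
  | nil => intro h; cases h; exact Forall₂.nil
  | cons hab h ih =>
      intro h2; cases h2 with
      | cons hbc h2' => exact Forall₂.cons (hab.trans hbc) (ih h2')

lemma dzg_compLE_trans {a b c : List ℕ} (h1 : CompLE a b) (h2 : CompLE b c) : CompLE a c := by
  obtain ⟨s, hs, hf⟩ := h1
  obtain ⟨t, ht, hg⟩ := h2
  obtain ⟨t', ht', hf'⟩ := dzg_sub_forall₂ hs hg
  exact ⟨t', ht'.trans ht, dzg_f2_trans hf hf'⟩

lemma dzg_interleave_succ (a : ℕ) (zs v : List ℕ) :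
    interleave ((a + 1) :: zs) v = 1 :: interleave (a :: zs) v := by
  cases v <;> simp [interleave, List.replicate_succ]

lemma dzg_mem (z v : List ℕ) : ∀ x ∈ interleave z v, x = 1 ∨ x ∈ v := by
  induction z generalizing v with
  | nil => simp [interleave]
  | cons a zs ih =>
      cases v with
      | nil =>
          intro x hx
          simp [interleave] at hx
          exact Or.inl hx.2
      | cons y ys =>
          intro x hx
          simp only [interleave, mem_append, mem_cons, mem_replicate] at hx
          rcases hx with h | h | h
          · exact Or.inl h.2
          · exact Or.inr (by simp [h])
          · rcases ih ys x h with h' | h'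
            · exact Or.inl h'
            · exact Or.inr (mem_cons_of_mem _ h')

lemma dzg_sum (z v : List ℕ) (hz : z.length = v.length + 1) :
    (interleave z v).sum = z.sum + v.sum := by
  induction v generalizing z with
  | nil =>
      match z, hz with
      | [a], _ => simp [interleave]
  | cons x xs ih =>
      match z, hz with
      | a :: zs, hz =>
        have hz' : zs.length = xs.length + 1 := by simpa using hz
        simp [interleave, ih zs hz', sum_replicate]
        ring

lemma dzg_count (z v : List ℕ) (hv : ∀ x ∈ v, 2 ≤ x) (hz : z.length = v.length + 1) :
    (interleave z v).count 1 = z.sum := by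
  induction v generalizing z with
  | nil =>
      match z, hz with
      | [a], _ => simp [interleave, count_replicate]
  | cons x xs ih =>
      match z, hz with
      | a :: zs, hz =>
        have hz' : zs.length = xs.length + 1 := by simpa using hz
        have hx : x ≠ 1 := by have := hv x (by simp); omega
        have := ih zs (fun y hy => hv y (mem_cons_of_mem _ hy)) hz'
        simp [interleave, count_append, count_replicate, count_cons, hx, this]

lemma dzg_c2 (z v : List ℕ) (hv : ∀ x ∈ v, 2 ≤ x) (hz : z.length = v.length + 1) :
    dzgC2 (interleave z v) = v.length := by
  induction v generalizing z with
  | nil =>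
      match z, hz with
      | [a], _ =>
        simp only [interleave, dzgC2]
        rw [countP_eq_zero.2]
        · rfl
        · intro x hx; simp [eq_of_mem_replicate hx]
  | cons x xs ih =>
      match z, hz with
      | a :: zs, hz =>
        have hz' : zs.length = xs.length + 1 := by simpa using hz
        have h2 : 2 ≤ x := hv x (by simp)
        have := ih zs (fun y hy => hv y (mem_cons_of_mem _ hy)) hz'
        simp only [interleave, dzgC2] at this ⊢
        rw [countP_append, countP_cons, countP_eq_zero.2, this]
        · simp [h2]
        · intro y hy; simp [eq_of_mem_replicate hy]

lemma dzg_B : ∀ (p z v q : List ℕ), (∀ x ∈ v, 2 ≤ x) → z.length = v.length + 1 →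
    interleave z v = p ++ 1 :: q → 0 < z.getD (dzgC2 p) 0 := by
  intro p
  induction p with
  | nil =>
      intro z v q hv hz heq
      match z, hz with
      | a :: zs, hz =>
        cases a with
        | zero =>
            cases v with
            | nil => simp [interleave] at heq
            | cons x xs =>
                have hinj : x :: interleave zs xs = 1 :: q := by simpa [interleave] using heq
                injection hinj with h1 _
                have := hv x (by simp)
                omega
        | succ b => simp [dzgC2]
  | cons b p' ih =>
      intro z v q hv hz heq
      match z, hz with
      | a :: zs, hz =>
        cases a with
        | zero =>
            cases v with
            | nil => simp [interleave] at heq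
            | cons x xs =>
                have hinj : x :: interleave zs xs = b :: (p' ++ 1 :: q) := by
                  simpa [interleave] using heq
                injection hinj with hbx heq'
                have h2 : 2 ≤ b := hbx ▸ hv x (by simp)
                have hres := ih zs xs q (fun y hy => hv y (mem_cons_of_mem _ hy))
                  (by simpa using hz) heq'
                have hcp : dzgC2 (b :: p') = dzgC2 p' + 1 := by
                  simp [dzgC2, countP_cons, h2]
                rw [hcp, getD_cons_succ]
                exact hres
        | succ c =>
            rw [dzg_interleave_succ] at heq
            have hinj : (1 : ℕ) :: interleave (c :: zs) v = b :: (p' ++ 1 :: q) := by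
              simpa using heq
            injection hinj with hb1 heq'
            have hthis := ih (c :: zs) v q hv (by simpa using hz) heq'
            have hcp : dzgC2 (b :: p') = dzgC2 p' := by
              simp [dzgC2, countP_cons, ← hb1]
            rw [hcp]
            rcases hm : dzgC2 p' with _ | j
            · simp
            · rw [hm] at hthis
              rw [getD_cons_succ]
              rw [getD_cons_succ] at hthis
              exact hthis

lemma dzg_V : ∀ (v z : List ℕ), z.length = v.length + 1 → v.Sublist (interleave z v) := by
  intro v
  induction v with
  | nil => intro z _; simp [nil_sublist]
  | cons x xs ih =>
      intro z hz
      match z, hz with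
      | a :: zs, hz =>
        have hz' : zs.length = xs.length + 1 := by simpa using hz
        calc x :: xs <+ x :: interleave zs xs := (ih zs hz').cons₂ x
          _ <+ replicate a 1 ++ x :: interleave zs xs := sublist_append_right _ _
          _ = interleave (a :: zs) (x :: xs) := rfl

lemma dzg_S {z' z : List ℕ} (h : Forall₂ (· ≤ ·) z' z) :
    ∀ v, (interleave z' v).Sublist (interleave z v) := by
  induction h with
  | nil => intro v; simp [interleave, Sublist.refl]
  | @cons a' a zs' zs hle h ih =>
      intro v
      cases v with
      | nil =>
          simpa [interleave] using (replicate_sublist_replicate 1).2 hle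
      | cons x xs =>
          show (replicate a' 1 ++ x :: interleave zs' xs).Sublist
            (replicate a 1 ++ x :: interleave zs xs)
          exact Sublist.append ((replicate_sublist_replicate 1).2 hle) ((ih xs).cons₂ x)

lemma dzg_P : ∀ (i : ℕ) (z v : List ℕ), z.length = v.length + 1 → i ≤ v.length →
    0 < z.getD i 0 → (v.take i ++ 1 :: v.drop i).Sublist (interleave z v) := by
  intro i
  induction i with
  | zero =>
      intro z v hz _ hpos
      match z, hz with
      | a :: zs, hz =>
        simp only [getD_cons_zero] at hpos
        obtain ⟨b, rfl⟩ : ∃ b, a = b + 1 := ⟨a - 1, by omega⟩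
        rw [dzg_interleave_succ]
        simpa using (dzg_V v (b :: zs) (by simpa using hz)).cons₂ 1
  | succ j ih =>
      intro z v hz hi hpos
      match z, v, hz, hi with
      | a :: zs, x :: xs, hz, hi =>
        have hz' : zs.length = xs.length + 1 := by simpa using hz
        have : (x :: (xs.take j ++ 1 :: xs.drop j)).Sublist (x :: interleave zs xs) :=
          (ih zs xs hz' (by simpa using hi) (by simpa using hpos)).cons₂ x
        calc ((x :: xs).take (j+1) ++ 1 :: (x :: xs).drop (j+1))
            = x :: (xs.take j ++ 1 :: xs.drop j) := by simp
          _ <+ x :: interleave zs xs := this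
          _ <+ replicate a 1 ++ x :: interleave zs xs := sublist_append_right _ _
          _ = interleave (a :: zs) (x :: xs) := rfl

lemma dzg_F2rep : ∀ (l : List ℕ), (∀ x ∈ l, 2 ≤ x) → Forall₂ (· ≤ ·) (replicate l.length 2) l := by
  intro l
  induction l with
  | nil => intro _; exact Forall₂.nil
  | cons x xs ih =>
      intro h
      exact Forall₂.cons (h x (by simp)) (ih (fun y hy => h y (mem_cons_of_mem _ hy)))

lemma dzg_rep_ge : ∀ (m : ℕ) (l : List ℕ), Forall₂ (· ≤ ·) (replicate m 2) l →
    l.length = m ∧ ∀ y ∈ l, 2 ≤ y := by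
  intro m
  induction m with
  | zero => intro l h; cases h; simp
  | succ n ih =>
      intro l h
      rw [replicate_succ] at h
      cases h with
      | cons hab h' =>
          obtain ⟨hl, hmem⟩ := ih _ h'
          constructor
          · simp [hl]
          · intro y hy
            rcases mem_cons.1 hy with rfl | hy'
            · exact hab
            · exact hmem y hy'

lemma dzg_T : ∀ (l : List ℕ) (k : ℕ), k ≤ l.sum →
    ∃ l', Forall₂ (· ≤ ·) l' l ∧ l'.sum + k = l.sum := by
  intro l
  induction l with
  | nil => intro k hk; simp at hk; exact ⟨[], Forall₂.nil, by simp [hk]⟩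
  | cons a l ih =>
      intro k hk
      by_cases h : k ≤ a
      · exact ⟨(a - k) :: l, Forall₂.cons (by omega) (forall₂_same.2 fun _ _ => le_refl _),
          by simp; omega⟩
      · obtain ⟨l', hf, hs⟩ := ih (k - a) (by simp at hk; omega)
        exact ⟨0 :: l', Forall₂.cons (Nat.zero_le _) hf, by simp; omega⟩

lemma dzg_E : ∀ (z : List ℕ) (i k : ℕ), i < z.length → k + 1 ≤ z.sum → 0 < z.getD i 0 →
    ∃ z', Forall₂ (· ≤ ·) z' z ∧ z'.sum + k = z.sum ∧ 0 < z'.getD i 0 := by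
  intro z
  induction z with
  | nil => intro i k h; simp at h
  | cons a zs ih =>
      intro i k hi hk hpos
      cases i with
      | zero =>
          simp only [getD_cons_zero] at hpos
          by_cases h : k + 1 ≤ a
          · exact ⟨(a - k) :: zs, Forall₂.cons (by omega) (forall₂_same.2 fun _ _ => le_refl _),
              by simp; omega, by simp; omega⟩
          · have hsum : a + zs.sum = (a :: zs).sum := by simp
            obtain ⟨l', hf, hs⟩ := dzg_T zs (k - (a - 1)) (by simp at hk; omega)
            refine ⟨1 :: l', Forall₂.cons (by omega) hf, ?_, by simp⟩
            simp at hk ⊢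
            omega
      | succ j =>
          simp only [getD_cons_succ] at hpos
          by_cases h : k ≤ a
          · exact ⟨(a - k) :: zs, Forall₂.cons (by omega) (forall₂_same.2 fun _ _ => le_refl _),
              by simp; omega, by simpa using hpos⟩
          · obtain ⟨z', hf, hs, hp⟩ := ih j (k - a) (by simpa using hi) (by simp at hk ⊢; omega) hpos
            exact ⟨0 :: z', Forall₂.cons (Nat.zero_le _) hf, by simp; omega, by simpa using hp⟩

lemma dzg_f2_split : ∀ (l₁ l₂ s : List ℕ), Forall₂ (· ≤ ·) (l₁ ++ l₂) s →
    ∃ s₁ s₂, s = s₁ ++ s₂ ∧ Forall₂ (· ≤ ·) l₁ s₁ ∧ Forall₂ (· ≤ ·) l₂ s₂ := by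
  intro l₁
  induction l₁ with
  | nil => intro l₂ s h; exact ⟨[], s, rfl, Forall₂.nil, h⟩
  | cons a l ih =>
      intro l₂ s h
      rw [cons_append] at h
      rcases forall₂_cons_left_iff.1 h with ⟨b, s', hab, h', rfl⟩
      obtain ⟨s₁, s₂, rfl, hf₁, hf₂⟩ := ih l₂ s' h'
      exact ⟨b :: s₁, s₂, rfl, Forall₂.cons hab hf₁, hf₂⟩

theorem detect_zero_gaps (k : ℕ) (z v w : List ℕ) (hv : ∀ x ∈ v, 2 ≤ x)
    (hz : z.length = v.length + 1) (hw : w = interleave z v) (h1 : k < w.count 1) :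
    ∀ i : Fin z.length,
      z.get i = 0 ↔
        ¬∃ u ∈ kDel k w,
          CompLE (List.replicate (i : ℕ) 2 ++ 1 :: List.replicate (v.length - i) 2) u := by
  intro i
  set n : ℕ := (i : ℕ) with hn
  have hnv : n ≤ v.length := by have := i.2; omega
  have hget : z.get i = z.getD n 0 := by
    rw [List.getD_eq_getElem z 0 (by exact i.2)]
    rfl
  constructor
  · -- forward
    intro hzi hex
    obtain ⟨u, ⟨hu1, hu2, hu3⟩, hcau⟩ := hex
    have hc : CompLE (List.replicate n 2 ++ 1 :: List.replicate (v.length - n) 2) w :=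
      dzg_compLE_trans hcau hu2
    obtain ⟨s, hsw, hf⟩ := hc
    obtain ⟨sA, sB', rfl, hfA, hfB'⟩ := dzg_f2_split _ _ _ hf
    rcases forall₂_cons_left_iff.1 hfB' with ⟨c, sB, hc1, hfB, rfl⟩
    obtain ⟨hlA, hmA⟩ := dzg_rep_ge _ _ hfA
    obtain ⟨hlB, hmB⟩ := dzg_rep_ge _ _ hfB
    -- decompose w
    obtain ⟨r1, r2, hw2, hs1, hs2⟩ := List.append_sublist_iff.1 hsw
    obtain ⟨r3, r4, hr2, hcm, hs4⟩ := List.cons_sublist_iff.1 hs2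
    obtain ⟨p', q', hr3⟩ := List.append_of_mem hcm
    have hwdec : w = (r1 ++ p') ++ c :: (q' ++ r4) := by
      rw [hw2, hr2, hr3]; simp
    -- counting
    have hc2w : dzgC2 w = v.length := by rw [hw]; exact dzg_c2 z v hv hz
    have hC2A : n ≤ dzgC2 (r1 ++ p') := by
      have h1' : dzgC2 sA ≤ dzgC2 r1 := List.Sublist.countP_le hs1
      have h2' : dzgC2 sA = n := by
        rw [← hlA]
        simpa [dzgC2] using (countP_eq_length (l := sA) (p := fun x => decide (2 ≤ x))).2
          (fun y hy => by simpa using hmA y hy)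
      have : dzgC2 (r1 ++ p') = dzgC2 r1 + dzgC2 p' := countP_append
      omega
    have hC2B : v.length - n ≤ dzgC2 (q' ++ r4) := by
      have h1' : dzgC2 sB ≤ dzgC2 r4 := List.Sublist.countP_le hs4
      have h2' : dzgC2 sB = v.length - n := by
        rw [← hlB]
        simpa [dzgC2] using (countP_eq_length (l := sB) (p := fun x => decide (2 ≤ x))).2
          (fun y hy => by simpa using hmB y hy)
      have : dzgC2 (q' ++ r4) = dzgC2 q' + dzgC2 r4 := countP_append
      omega
    have hsplit : dzgC2 w = dzgC2 (r1 ++ p') + dzgC2 (c :: (q' ++ r4)) := by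
      rw [hwdec]; exact countP_append
    have hcval : dzgC2 (c :: (q' ++ r4)) =
        dzgC2 (q' ++ r4) + (if 2 ≤ c then 1 else 0) := by
      simp [dzgC2, countP_cons]
    by_cases h2c : 2 ≤ c
    · rw [hcval, if_pos h2c] at hsplit; omega
    · have hcv : c = 1 := by omega
      have hXn : dzgC2 (r1 ++ p') = n := by
        rw [hcval, if_neg h2c] at hsplit; omega
      have := dzg_B (r1 ++ p') z v (q' ++ r4) hv hz (by rw [← hw, hwdec, hcv])
      rw [hXn] at this
      omega
  · -- backward
    intro hns
    by_contra hne
    apply hns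
    have hpos : 0 < z.getD n 0 := by omega
    have hksum : k + 1 ≤ z.sum := by
      have : w.count 1 = z.sum := by rw [hw]; exact dzg_count z v hv hz
      omega
    obtain ⟨z', hf, hsum, hp⟩ := dzg_E z n k i.2 hksum hpos
    have hlen : z'.length = z.length := hf.length_eq
    have hz' : z'.length = v.length + 1 := by omega
    refine ⟨interleave z' v, ⟨?_, ?_, ?_⟩, ?_⟩
    · intro x hx
      rcases dzg_mem z' v x hx with rfl | hx'
      · exact le_refl 1
      · exact le_trans (by omega) (hv x hx')
    · exact ⟨interleave z' v, hw ▸ dzg_S hf v, forall₂_same.2 fun _ _ => le_refl _⟩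
    · rw [dzg_sum z' v hz', hw, dzg_sum z v hz]; omega
    · refine ⟨v.take n ++ 1 :: v.drop n, dzg_P n z' v hz' hnv hp, ?_⟩
      have hA : Forall₂ (· ≤ ·) (replicate n 2) (v.take n) := by
        have := dzg_F2rep (v.take n) (fun y hy => hv y (mem_of_mem_take hy))
        rwa [length_take, min_eq_left hnv] at this
      have hB : Forall₂ (· ≤ ·) (replicate (v.length - n) 2) (v.drop n) := by
        have := dzg_F2rep (v.drop n) (fun y hy => hv y (mem_of_mem_drop hy))
        rwa [length_drop] at this
      exact List.rel_append hA (Forall₂.cons (le_refl 1) hB)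
end

section
/- Every composition w of n ≥ 3k+1 with more than k entries equal to 1 is reconstructible from its set of k-deletions: if w and w' are compositions of n ≥ 3k+1, each with more than k entries equal to 1, and they have the same set of k-deletions, then w = w'. -/
open List

abbrev SF : List ℕ → List ℕ → Prop := SublistForall₂ (· ≤ ·)





lemma compLE_iff_SF {u w : List ℕ} : CompLE u w ↔ SF u w := by
  constructor
  · rintro ⟨v, hs, hf⟩; exact List.sublistForall₂_iff.mpr ⟨v, hf, hs⟩
  · intro h
    obtain ⟨v, hf, hs⟩ := List.sublistForall₂_iff.mp h
    exact ⟨v, hs, hf⟩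

lemma sf_trans {a b c : List ℕ} (h1 : SF a b) (h2 : SF b c) : SF a c :=
  IsTrans.trans a b c h1 h2

lemma sf_length_le {u w : List ℕ} (h : SF u w) : u.length ≤ w.length := by
  induction h with
  | nil => simp
  | cons _ _ ih => simpa using Nat.succ_le_succ ih
  | cons_right _ ih => exact ih.trans (by simp)

lemma sf_sum_le {u w : List ℕ} (h : SF u w) : u.sum ≤ w.sum :=
  h.sum_le_sum (fun a _ => Nat.zero_le a)

lemma sf_count2_le {u w : List ℕ} (h : SF u w) :
    u.countP (fun x => 2 ≤ x) ≤ w.countP (fun x => 2 ≤ x) := by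
  induction h with
  | nil => simp
  | @cons a b l₁ l₂ hab _ ih =>
      by_cases ha : 2 ≤ a
      · have hb2 : 2 ≤ b := ha.trans hab
        simp only [countP_cons, decide_eq_true_eq, if_pos ha, if_pos hb2]
        omega
      · simp only [countP_cons, decide_eq_true_eq, if_neg ha]
        by_cases hb2 : 2 ≤ b <;> simp [hb2] <;> omega
  | @cons_right a l₁ l₂ _ ih =>
      rw [countP_cons]; omega

lemma sf_nil_left (w : List ℕ) : SF [] w := SublistForall₂.nil

lemma sf_weaken_left (l : List ℕ) {q w : List ℕ} (h : SF q w) : SF q (l ++ w) := by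
  induction l with
  | nil => simpa
  | cons a t ih => exact SublistForall₂.cons_right ih

lemma sf_append {q₁ q₂ w₁ w₂ : List ℕ} (h1 : SF q₁ w₁) (h2 : SF q₂ w₂) :
    SF (q₁ ++ q₂) (w₁ ++ w₂) := by
  induction h1 with
  | nil => exact sf_weaken_left _ h2
  | cons hab _ ih => exact SublistForall₂.cons hab ih
  | cons_right _ ih => exact SublistForall₂.cons_right ih

lemma sf_split {l w : List ℕ} (h : SF l w) :
    ∀ q₁ q₂, l = q₁ ++ q₂ → ∃ w₁ w₂, w = w₁ ++ w₂ ∧ SF q₁ w₁ ∧ SF q₂ w₂ := by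
  induction h with
  | @nil l₂ =>
      intro q₁ q₂ he
      obtain ⟨h1, h2⟩ := List.append_eq_nil_iff.mp he.symm
      exact ⟨[], l₂, rfl, by simp [h1, sf_nil_left], by simp [h2, sf_nil_left]⟩
  | @cons a b l₁ l₂ hab htail ih =>
      intro q₁ q₂ he
      cases q₁ with
      | nil =>
          refine ⟨[], b :: l₂, rfl, sf_nil_left _, ?_⟩
          simp only [nil_append] at he
          rw [← he]; exact SublistForall₂.cons hab htail
      | cons x t =>
          simp only [cons_append] at he
          have hx : a = x := by injection he
          have ht : l₁ = t ++ q₂ := by injection he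
          obtain ⟨w₁, w₂, hw, hs1, hs2⟩ := ih t q₂ ht
          exact ⟨b :: w₁, w₂, by rw [hw]; rfl, by rw [← hx]; exact SublistForall₂.cons hab hs1, hs2⟩
  | @cons_right a l₁ l₂ htail ih =>
      intro q₁ q₂ he
      obtain ⟨w₁, w₂, hw, hs1, hs2⟩ := ih q₁ q₂ he
      exact ⟨a :: w₁, w₂, by rw [hw]; rfl, SublistForall₂.cons_right hs1, hs2⟩

lemma sf_of_sublist {u w : List ℕ} (h : u.Sublist w) : SF u w := by
  induction h with
  | slnil => exact SublistForall₂.nil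
  | cons a _ ih => exact SublistForall₂.cons_right ih
  | cons_cons a _ ih => exact SublistForall₂.cons (le_refl _) ih

lemma sf_ones_le {v : List ℕ} (hv : IsComposition v) : ∀ a, a ≤ v.length → SF (replicate a 1) v := by
  induction v with
  | nil => intro a ha; simp at ha; simp [ha]; exact SublistForall₂.nil
  | cons x t ih =>
      intro a ha
      cases a with
      | zero => exact SublistForall₂.nil
      | succ a' =>
          rw [replicate_succ]
          exact SublistForall₂.cons (hv x (by simp)) (ih (fun y hy => hv y (by simp [hy])) a' (by simpa using ha))

lemma sf_twos {v : List ℕ} (hv : ∀ x ∈ v, 2 ≤ x) : SF (replicate v.length 2) v := by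
  induction v with
  | nil => exact SublistForall₂.nil
  | cons x t ih =>
      rw [length_cons, replicate_succ]
      exact SublistForall₂.cons (hv x (by simp)) (ih (fun y hy => hv y (by simp [hy])))


lemma sf_forall₂ {u v : List ℕ} (h : SF u v) : v.length ≤ u.length → Forall₂ (· ≤ ·) u v := by
  induction h with
  | @nil l =>
      intro hl
      have hli : l = [] := List.length_eq_zero_iff.mp (Nat.le_zero.mp (by simpa using hl))
      subst hli; exact Forall₂.nil
  | @cons a b l₁ l₂ hab htail ih =>
      intro hl
      exact Forall₂.cons hab (ih (by simpa using hl))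
  | @cons_right a l₁ l₂ htail ih =>
      intro hl
      exfalso
      have := sf_length_le htail
      simp only [length_cons] at hl
      omega

lemma forall₂_antisymm : ∀ {u v : List ℕ}, Forall₂ (· ≤ ·) u v → Forall₂ (· ≤ ·) v u → u = v := by
  intro u
  induction u with
  | nil => intro v h1 _; cases h1; rfl
  | cons a t ih =>
      intro v h1 h2
      cases h1 with
      | cons hab htail =>
          rename_i b l
          cases h2 with
          | cons hba htail2 =>
              rw [Nat.le_antisymm hab hba, ih htail htail2]
def sk (w : List ℕ) : List ℕ := w.filter (fun x => 2 ≤ x)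

lemma sk_cons_small {x : ℕ} (hx : ¬ 2 ≤ x) (t : List ℕ) : sk (x :: t) = sk t := by
  simp [sk, filter_cons, hx]

lemma sk_cons_big {x : ℕ} (hx : 2 ≤ x) (t : List ℕ) : sk (x :: t) = x :: sk t := by
  simp [sk, filter_cons, hx]

lemma sk_append (a b : List ℕ) : sk (a ++ b) = sk a ++ sk b := by
  simp [sk, filter_append]

lemma sk_mem_two {w : List ℕ} {x : ℕ} (hx : x ∈ sk w) : 2 ≤ x := by
  have := List.of_mem_filter hx
  simpa using this

lemma sk_sublist (w : List ℕ) : (sk w).Sublist w := filter_sublist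

-- sum and length identities
lemma sum_eq_sk_add_count {w : List ℕ} (hw : IsComposition w) :
    w.sum = (sk w).sum + w.count 1 := by
  induction w with
  | nil => simp [sk]
  | cons x t ih =>
      have hx1 : 1 ≤ x := hw x (by simp)
      have ht : IsComposition t := fun y hy => hw y (by simp [hy])
      by_cases h2 : 2 ≤ x
      · have hne : x ≠ 1 := by omega
        rw [sk_cons_big h2, sum_cons, sum_cons, count_cons]
        simp [hne, ih ht]; omega
      · have he : x = 1 := by omega
        rw [sk_cons_small h2, sum_cons, count_cons]
        simp [he, ih ht]; omega

lemma length_eq_sk_add_count {w : List ℕ} (hw : IsComposition w) :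
    w.length = (sk w).length + w.count 1 := by
  induction w with
  | nil => simp [sk]
  | cons x t ih =>
      have hx1 : 1 ≤ x := hw x (by simp)
      have ht : IsComposition t := fun y hy => hw y (by simp [hy])
      by_cases h2 : 2 ≤ x
      · have hne : x ≠ 1 := by omega
        rw [sk_cons_big h2, length_cons, length_cons, count_cons]
        simp [hne, ih ht]; omega
      · have he : x = 1 := by omega
        rw [sk_cons_small h2, length_cons, count_cons]
        simp [he, ih ht]; omega

lemma sk_sum_ge {l : List ℕ} (h : ∀ x ∈ l, 2 ≤ x) : 2 * l.length ≤ l.sum := by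
  induction l with
  | nil => simp
  | cons x t ih =>
      have := h x (by simp)
      have := ih (fun y hy => h y (by simp [hy]))
      simp only [length_cons, sum_cons]; omega

lemma sf_filter {q v : List ℕ} (h : SF q v) (hq : ∀ x ∈ q, 2 ≤ x) : SF q (sk v) := by
  induction h with
  | nil => exact SublistForall₂.nil
  | @cons a b l₁ l₂ hab htail ih =>
      have ha : 2 ≤ a := hq a (by simp)
      have hb : 2 ≤ b := ha.trans hab
      rw [sk_cons_big hb]
      exact SublistForall₂.cons hab (ih (fun y hy => hq y (by simp [hy])))
  | @cons_right a l₁ l₂ htail ih =>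
      by_cases hb : 2 ≤ a
      · rw [sk_cons_big hb]; exact SublistForall₂.cons_right (ih hq)
      · rw [sk_cons_small hb]; exact ih hq

-- decomposition of r into leading ones and a big head
lemma ones_split : ∀ (r : List ℕ), IsComposition r → sk r ≠ [] →
    ∃ r₁ h r₃, r = r₁ ++ h :: r₃ ∧ (∀ x ∈ r₁, x = 1) ∧ 2 ≤ h := by
  intro r
  induction r with
  | nil => intro _ hne; simp [sk] at hne
  | cons x t ih =>
      intro hc hne
      by_cases h2 : 2 ≤ x
      · exact ⟨[], x, t, by simp, by simp, h2⟩
      · have hx1 : x = 1 := by have := hc x (by simp); omega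
        rw [sk_cons_small h2] at hne
        obtain ⟨r₁, h, r₃, he, h1, hh⟩ := ih (fun y hy => hc y (by simp [hy])) hne
        exact ⟨x :: r₁, h, r₃, by simp [he], by simpa [hx1] using h1, hh⟩
section EXT

lemma ext_lemma : ∀ (w : List ℕ), IsComposition w → ∀ (q : List ℕ) (S : ℕ), IsComposition q →
    SF q w → q.sum ≤ S → S ≤ w.sum →
    ∃ u, IsComposition u ∧ SF q u ∧ SF u w ∧ u.sum = S := by
  intro w
  induction w with
  | nil =>
      intro _ q S hq hsf hq1 hq2
      cases hsf
      refine ⟨[], fun x hx => by simp at hx, SublistForall₂.nil, SublistForall₂.nil, ?_⟩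
      simp at hq2 ⊢; omega
  | cons x w₂ ih =>
      intro hw q S hq hsf hqS hSw
      have hwx : 1 ≤ x := hw x (by simp)
      have hw₂ : IsComposition w₂ := fun y hy => hw y (by simp [hy])
      have hsum : (x :: w₂).sum = x + w₂.sum := by simp
      cases hsf with
      | nil =>
          -- q = []
          by_cases hS : S ≤ w₂.sum
          · obtain ⟨u, hu1, hu2, hu3, hu4⟩ :=
              ih hw₂ [] S (fun y hy => by simp at hy) SublistForall₂.nil (by simp) hS
            exact ⟨u, hu1, hu2, SublistForall₂.cons_right hu3, hu4⟩
          · push_neg at hS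
            set e := S - w₂.sum with he
            have he1 : 1 ≤ e := by omega
            have hex : e ≤ x := by rw [hsum] at hSw; omega
            obtain ⟨u', hu1, hu2, hu3, hu4⟩ :=
              ih hw₂ [] w₂.sum (fun y hy => by simp at hy) SublistForall₂.nil (by simp) le_rfl
            refine ⟨e :: u', ?_, SublistForall₂.cons_right hu2, SublistForall₂.cons hex hu3, ?_⟩
            · intro y hy; rcases List.mem_cons.mp hy with h | h
              · omega
              · exact hu1 y h
            · simp [hu4]; omega
      | @cons a b q₁ l₂ hax htail =>
          -- q = a :: q₁, a ≤ b = x, SF q₁ w₂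
          have hq₁ : IsComposition q₁ := fun y hy => hq y (by simp [hy])
          have ha1 : 1 ≤ a := hq a (by simp)
          have hq₁sum : q₁.sum ≤ w₂.sum := sf_sum_le htail
          set e := max a (S - w₂.sum) with he
          have hae : a ≤ e := le_max_left _ _
          have hex : e ≤ x := by
            apply max_le hax; rw [hsum] at hSw; omega
          have h1 : q₁.sum ≤ S - e := by
            simp only [sum_cons] at hqS; omega
          have h2 : S - e ≤ w₂.sum := by omega
          obtain ⟨u', hu1, hu2, hu3, hu4⟩ := ih hw₂ q₁ (S - e) hq₁ htail h1 h2
          refine ⟨e :: u', ?_, SublistForall₂.cons hae hu2, SublistForall₂.cons hex hu3, ?_⟩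
          · intro y hy; rcases List.mem_cons.mp hy with h | h
            · omega
            · exact hu1 y h
          · simp only [sum_cons, hu4]
            have : e ≤ S := by
              simp only [sum_cons] at hqS; omega
            omega
      | cons_right htail =>
          -- SF q w₂
          have hqsum : q.sum ≤ w₂.sum := sf_sum_le htail
          by_cases hS : S ≤ w₂.sum
          · obtain ⟨u, hu1, hu2, hu3, hu4⟩ := ih hw₂ q S hq htail hqS hS
            exact ⟨u, hu1, hu2, SublistForall₂.cons_right hu3, hu4⟩
          · push_neg at hS
            set e := S - w₂.sum with he
            have he1 : 1 ≤ e := by omega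
            have hex : e ≤ x := by rw [hsum] at hSw; omega
            obtain ⟨u', hu1, hu2, hu3, hu4⟩ := ih hw₂ q w₂.sum hq htail hqsum le_rfl
            refine ⟨e :: u', ?_, SublistForall₂.cons_right hu2, SublistForall₂.cons hex hu3, ?_⟩
            · intro y hy; rcases List.mem_cons.mp hy with h | h
              · omega
              · exact hu1 y h
            · simp [hu4]; omega

end EXT
lemma count2_replicate_two (ζ : ℕ) : (replicate ζ 2).countP (fun x => 2 ≤ x) = ζ := by
  induction ζ with
  | zero => simp
  | succ m ih => rw [replicate_succ, countP_cons]; simp [ih]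

lemma count2_all_ones {l : List ℕ} (h : ∀ x ∈ l, x = 1) : l.countP (fun x => 2 ≤ x) = 0 := by
  rw [countP_eq_zero]
  intro a ha
  have := h a ha
  simp [this]

lemma count2_sk (l : List ℕ) : l.countP (fun x => 2 ≤ x) = (sk l).length :=
  countP_eq_length_filter

lemma first_diff : ∀ (w w' : List ℕ), w.length = w'.length → IsComposition w → IsComposition w' →
    sk w = sk w' → w ≠ w' →
    ∃ p b r r', 2 ≤ b ∧ ((w = p ++ 1 :: r ∧ w' = p ++ b :: r') ∨ (w' = p ++ 1 :: r ∧ w = p ++ b :: r')) := by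
  intro w
  induction w with
  | nil =>
      intro w' hl _ _ _ hne
      cases w' with
      | nil => exact absurd rfl hne
      | cons y t => simp at hl
  | cons x ws ih =>
      intro w' hl hcw hcw' hsk hne
      cases w' with
      | nil => simp at hl
      | cons y ws' =>
          have hx1 : 1 ≤ x := hcw x (by simp)
          have hy1 : 1 ≤ y := hcw' y (by simp)
          by_cases hxy : x = y
          · subst hxy
            have hsk' : sk ws = sk ws' := by
              by_cases h2 : 2 ≤ x
              · rw [sk_cons_big h2, sk_cons_big h2] at hsk
                injection hsk
              · rwa [sk_cons_small h2, sk_cons_small h2] at hsk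
            have hne' : ws ≠ ws' := fun he => hne (by rw [he])
            obtain ⟨p, b, r, r', hb, hcase⟩ := ih ws' (by simpa using hl)
              (fun z hz => hcw z (by simp [hz])) (fun z hz => hcw' z (by simp [hz])) hsk' hne'
            refine ⟨x :: p, b, r, r', hb, ?_⟩
            rcases hcase with ⟨e1, e2⟩ | ⟨e1, e2⟩
            · exact Or.inl ⟨by rw [cons_append, e1], by rw [cons_append, e2]⟩
            · exact Or.inr ⟨by rw [cons_append, e1], by rw [cons_append, e2]⟩
          · by_cases hx2 : 2 ≤ x
            · by_cases hy2 : 2 ≤ y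
              · exfalso
                rw [sk_cons_big hx2, sk_cons_big hy2] at hsk
                exact hxy (by injection hsk)
              · have hyy : y = 1 := by omega
                exact ⟨[], x, ws', ws, hx2, Or.inr ⟨by simp [hyy], by simp⟩⟩
            · have hxx : x = 1 := by omega
              have hy2 : 2 ≤ y := by omega
              exact ⟨[], y, ws, ws', hy2, Or.inl ⟨by simp [hxx], by simp⟩⟩
lemma core (k n : ℕ) (w w' : List ℕ) (hw : IsComposition w) (hw' : IsComposition w')
    (hnw : w.sum = n) (hnw' : w'.sum = n) (h3 : 3 * k + 1 ≤ n) (h1 : k < w.count 1)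
    (hsk : sk w = sk w')
    (H : ∀ q, IsComposition q → q.sum + k ≤ n → (SF q w ↔ SF q w'))
    (p r r' : List ℕ) (b : ℕ) (hb : 2 ≤ b)
    (hwe : w = p ++ 1 :: r) (hwe' : w' = p ++ b :: r') : False := by
  have hcomp_p : IsComposition p := fun y hy => hw y (by rw [hwe]; simp [hy])
  have hcomp_r : IsComposition r := fun y hy => hw y (by rw [hwe]; simp [hy])
  have hcomp_r' : IsComposition r' := fun y hy => hw' y (by rw [hwe']; simp [hy])
  have hskw : sk w = sk p ++ sk r := by
    rw [hwe, show p ++ 1 :: r = p ++ [1] ++ r by simp, sk_append, sk_append,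
      show sk [1] = [] by simp [sk]]
    simp
  have hskw' : sk w' = sk p ++ b :: sk r' := by
    rw [hwe', show p ++ b :: r' = p ++ [b] ++ r' by simp, sk_append, sk_append,
      show sk [b] = [b] by simp [sk, hb]]
    simp
  have hskr : sk r = b :: sk r' := by
    have h0 := hsk
    rw [hskw, hskw'] at h0
    exact List.append_cancel_left h0
  obtain ⟨r₁, hh, r₃, hre, hr₁, hhb⟩ := ones_split r hcomp_r (by rw [hskr]; simp)
  -- numeric abbreviations
  set z := (sk w).length with hzdef
  set zp := (sk p).length with hzpdef
  set ζ := (sk r).length with hζdef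
  have hz : z = zp + ζ := by rw [hzdef, hskw, length_append]
  have hζ1 : (sk r').length + 1 = ζ := by rw [hζdef, hskr, length_cons]
  have hsum : n = (sk w).sum + w.count 1 := by rw [← hnw]; exact sum_eq_sk_add_count hw
  have hsum' : n = (sk w).sum + w'.count 1 := by
    rw [← hnw', hsk]; exact sum_eq_sk_add_count hw'
  have hcc : w.count 1 = w'.count 1 := by omega
  have hlenw : w.length = z + w.count 1 := length_eq_sk_add_count hw
  have hlenw' : w'.length = z + w.count 1 := by
    rw [hcc]
    have := length_eq_sk_add_count hw'
    rw [← hsk] at this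
    exact this
  have hskge : 2 * z ≤ (sk w).sum := sk_sum_ge (fun x hx => sk_mem_two hx)
  have hlw : w.length = p.length + 1 + r.length := by rw [hwe]; simp; omega
  have hlw' : w'.length = p.length + 1 + r'.length := by rw [hwe']; simp; omega
  have hlr : r.length = r₁.length + 1 + r₃.length := by rw [hre]; simp; omega
  have hzp_le : zp ≤ p.length := (sk_sublist p).length_le
  by_cases hA : (p.length + 1) + 2 * ζ + k ≤ n
  · -- witness A
    set qA := replicate (p.length + 1) 1 ++ replicate ζ 2 with hqAdef
    have hqAcomp : IsComposition qA := by
      intro y hy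
      rw [hqAdef] at hy
      rcases mem_append.mp hy with h | h <;> rw [eq_of_mem_replicate h] <;> omega
    have hqAsum : qA.sum = (p.length + 1) + 2 * ζ := by
      rw [hqAdef, sum_append, sum_replicate, sum_replicate, smul_eq_mul, smul_eq_mul]
      omega
    have hqAw : SF qA w := by
      rw [hwe, show p ++ 1 :: r = (p ++ [1]) ++ r by simp, hqAdef]
      refine sf_append ?_ ?_
      · have hlen1 : p.length + 1 = (p ++ [1]).length := by simp
        rw [hlen1]
        apply sf_ones_le _ _ le_rfl
        intro y hy
        rcases mem_append.mp hy with h | h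
        · exact hcomp_p y h
        · simp at h; omega
      · refine sf_trans ?_ (sf_of_sublist (sk_sublist r))
        rw [hζdef]
        exact sf_twos (fun x hx => sk_mem_two hx)
    have hqAw' : SF qA w' := (H qA hqAcomp (by omega)).mp hqAw
    obtain ⟨w₁, w₂, hsplit, hs1, hs2⟩ := sf_split hqAw' _ _ rfl
    have hl1 : p.length + 1 ≤ w₁.length := by
      have := sf_length_le hs1; simpa using this
    have hc2 : ζ ≤ w₂.countP (fun x => 2 ≤ x) := by
      have := sf_count2_le hs2
      rwa [count2_replicate_two] at this
    have hw₂eq : w₂ = drop w₁.length w' := by rw [hsplit, drop_left]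
    have hdr : drop (p.length + 1) w' = r' := by
      rw [hwe', show p ++ b :: r' = (p ++ [b]) ++ r' by simp]
      have : (p ++ [b]).length = p.length + 1 := by simp
      rw [← this, drop_left]
    have hsub : w₂.Sublist r' := by
      rw [hw₂eq, show w₁.length = (p.length + 1) + (w₁.length - (p.length + 1)) by omega,
        ← drop_drop, hdr]
      exact drop_sublist _ _
    have hr'c : r'.countP (fun x => 2 ≤ x) = ζ - 1 := by
      rw [count2_sk]; omega
    have := hsub.countP_le (p := fun x => 2 ≤ x)
    omega
  · -- budget for witness M via arithmetic
    have hMB : 2 * (zp + 1) + (r₃.length + 1) + k ≤ n := by omega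
    set qM := replicate (zp + 1) 2 ++ replicate (r₃.length + 1) 1 with hqMdef
    have hqMcomp : IsComposition qM := by
      intro y hy
      rw [hqMdef] at hy
      rcases mem_append.mp hy with h | h <;> rw [eq_of_mem_replicate h] <;> omega
    have hqMsum : qM.sum = 2 * (zp + 1) + (r₃.length + 1) := by
      rw [hqMdef, sum_append, sum_replicate, sum_replicate, smul_eq_mul, smul_eq_mul]
      omega
    have hqMw' : SF qM w' := by
      rw [hwe', show p ++ b :: r' = (p ++ [b]) ++ r' by simp, hqMdef]
      refine sf_append ?_ ?_
      · refine sf_trans ?_ (sf_of_sublist ((sk_sublist p).append (Sublist.refl [b])))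
        have hlen2 : zp + 1 = (sk p ++ [b]).length := by simp [hzpdef]
        rw [hlen2]
        apply sf_twos
        intro x hx
        rcases mem_append.mp hx with h | h
        · exact sk_mem_two h
        · simp at h; omega
      · apply sf_ones_le hcomp_r'
        omega
    have hqMw : SF qM w := (H qM hqMcomp (by omega)).mpr hqMw'
    obtain ⟨w₁, w₂, hsplit, hs1, hs2⟩ := sf_split hqMw _ _ rfl
    have hc1 : zp + 1 ≤ w₁.countP (fun x => 2 ≤ x) := by
      have := sf_count2_le hs1
      rwa [count2_replicate_two] at this
    have hl2 : r₃.length + 1 ≤ w₂.length := by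
      have := sf_length_le hs2; simpa using this
    have hlen_split : w.length = w₁.length + w₂.length := by rw [hsplit]; simp
    by_cases hcase : w₁.length ≤ p.length + 1 + r₁.length
    · -- w₁ is a prefix of p ++ 1 :: r₁, so it has at most zp big entries
      have hw₁eq : w₁ = take w₁.length w := by rw [hsplit, take_left]
      have hwP : w = (p ++ 1 :: r₁) ++ (hh :: r₃) := by rw [hwe, hre]; simp
      have hPlen : (p ++ 1 :: r₁).length = p.length + 1 + r₁.length := by simp; omega
      have htk : take w₁.length w = take w₁.length (p ++ 1 :: r₁) := by
        rw [hwP, take_append]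
        have : w₁.length - (p ++ 1 :: r₁).length = 0 := by omega
        rw [this]
        simp
      have hsubP : w₁.Sublist (p ++ 1 :: r₁) := by
        rw [hw₁eq, htk]; exact take_sublist _ _
      have hcP : (p ++ 1 :: r₁).countP (fun x => 2 ≤ x) = zp := by
        rw [countP_append, countP_cons, count2_all_ones hr₁, count2_sk]
        simp [hzpdef]
      have := hsubP.countP_le (p := fun x => 2 ≤ x)
      omega
    · push_neg at hcase
      omega
theorem reconstruct_many_ones (k n : ℕ) (w w' : List ℕ)
    (hw : IsComposition w) (hw' : IsComposition w')
    (hnw : w.sum = n) (hnw' : w'.sum = n) (h : 3 * k + 1 ≤ n)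
    (h1 : k < w.count 1) (h1' : k < w'.count 1)
    (hdel : kDel k w = kDel k w') : w = w' := by
  by_contra hne
  have hkn : k ≤ n := by omega
  have Hdir : ∀ (a b : List ℕ), IsComposition a → a.sum = n →
      kDel k a = kDel k b → ∀ q, IsComposition q → q.sum + k ≤ n → SF q a → SF q b := by
    intro a b ha hsa hd q hq hqs hqa
    obtain ⟨u, hu1, hu2, hu3, hu4⟩ := ext_lemma a ha q (n - k) hq hqa (by omega) (by omega)
    have hmem : u ∈ kDel k a := ⟨hu1, compLE_iff_SF.mpr hu3, by rw [hsa]; omega⟩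
    rw [hd] at hmem
    exact sf_trans hu2 (compLE_iff_SF.mp hmem.2.1)
  have H : ∀ q, IsComposition q → q.sum + k ≤ n → (SF q w ↔ SF q w') :=
    fun q hq hqs => ⟨Hdir w w' hw hnw hdel q hq hqs, Hdir w' w hw' hnw' hdel.symm q hq hqs⟩
  -- skeleton equality
  have hskcomp : ∀ (v : List ℕ), IsComposition (sk v) :=
    fun v y hy => le_trans (by omega) (sk_mem_two hy)
  have hskw_budget : (sk w).sum + k ≤ n := by
    have := sum_eq_sk_add_count hw; rw [hnw] at this; omega
  have hskw'_budget : (sk w').sum + k ≤ n := by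
    have := sum_eq_sk_add_count hw'; rw [hnw'] at this; omega
  have hsk1 : SF (sk w) (sk w') :=
    sf_filter ((H (sk w) (hskcomp w) hskw_budget).mp (sf_of_sublist (sk_sublist w)))
      (fun x hx => sk_mem_two hx)
  have hsk2 : SF (sk w') (sk w) :=
    sf_filter ((H (sk w') (hskcomp w') hskw'_budget).mpr (sf_of_sublist (sk_sublist w')))
      (fun x hx => sk_mem_two hx)
  have hlen1 := sf_length_le hsk1
  have hlen2 := sf_length_le hsk2
  have hsk : sk w = sk w' :=
    forall₂_antisymm (sf_forall₂ hsk1 (by omega)) (sf_forall₂ hsk2 (by omega))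
  -- length equality
  have hcounts : w.count 1 = w'.count 1 := by
    have e1 := sum_eq_sk_add_count hw
    have e2 := sum_eq_sk_add_count hw'
    rw [hnw] at e1; rw [hnw', ← hsk] at e2
    omega
  have hlen : w.length = w'.length := by
    have e1 := length_eq_sk_add_count hw
    have e2 := length_eq_sk_add_count hw'
    rw [← hsk] at e2
    omega
  obtain ⟨p, b, r, r', hb, hcase⟩ := first_diff w w' hlen hw hw' hsk hne
  rcases hcase with ⟨e1, e2⟩ | ⟨e1, e2⟩
  · exact core k n w w' hw hw' hnw hnw' h h1 hsk H p r r' b hb e1 e2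
  · exact core k n w' w hw' hw hnw' hnw h h1' hsk.symm
      (fun q hq hqs => (H q hq hqs).symm) p r r' b hb e1 e2
end

section
/- If two compositions of n have the same set of k-deletions (for some k with n ≥ k + 1), then for every j with k ≤ j ≤ n − 1 they have the same set of j-deletions. -/
lemma forall2_sum_le {u t : List ℕ} (h : List.Forall₂ (· ≤ ·) u t) : u.sum ≤ t.sum := by
  induction h with
  | nil => simp
  | cons hab _ ih => simp; omega

lemma my_sublist_sum_le {t w : List ℕ} (h : t.Sublist w) : t.sum ≤ w.sum := by
  induction h with
  | slnil => simp
  | cons a h ih => simp; omega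
  | cons_cons a h ih => simp; omega

lemma forall2_le_trans {u v t : List ℕ} (h1 : List.Forall₂ (· ≤ ·) u v)
    (h2 : List.Forall₂ (· ≤ ·) v t) : List.Forall₂ (· ≤ ·) u t := by
  induction h1 generalizing t with
  | nil => cases h2; exact List.Forall₂.nil
  | cons hab h ih =>
    cases h2 with
    | cons hbc h2' => exact List.Forall₂.cons (le_trans hab hbc) (ih h2')

lemma forall2_eq_of_sum {u t : List ℕ} (h : List.Forall₂ (· ≤ ·) u t)
    (hs : u.sum = t.sum) : u = t := by
  induction h with
  | nil => rfl
  | cons hab h ih =>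
    simp only [List.sum_cons] at hs
    have := forall2_sum_le h
    have h1 : _ = _ := ih (by omega)
    simp [h1]; omega

lemma sublist_eq_of_sum {t w : List ℕ} (h : t.Sublist w) (hw : IsComposition w)
    (hs : t.sum = w.sum) : t = w := by
  induction h with
  | slnil => rfl
  | @cons l₁ l₂ a h ih =>
    exfalso
    have h1 := my_sublist_sum_le h
    have h2 : 1 ≤ a := hw a (by simp)
    simp only [List.sum_cons] at hs; omega
  | @cons_cons l₁ l₂ a h ih =>
    simp only [List.sum_cons] at hs
    have hc : IsComposition l₂ := fun x hx => hw x (by simp [hx])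
    rw [ih hc (by omega)]

lemma forall2_sublist {s v t : List ℕ} (h : List.Forall₂ (· ≤ ·) v t) (hs : s.Sublist v) :
    ∃ s', s'.Sublist t ∧ List.Forall₂ (· ≤ ·) s s' := by
  induction h generalizing s with
  | nil => exact ⟨[], by simp [List.sublist_nil.mp hs], by simp [List.sublist_nil.mp hs]⟩
  | @cons a b v t hab hvt ih =>
    rcases List.sublist_cons_iff.mp hs with h1 | ⟨r, rfl, hr⟩
    · obtain ⟨s', hs1, hs2⟩ := ih h1
      exact ⟨s', hs1.cons b, hs2⟩
    · obtain ⟨s', hs1, hs2⟩ := ih hr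
      exact ⟨b :: s', hs1.cons₂ b, List.Forall₂.cons hab hs2⟩

lemma step {u t w : List ℕ} (ht : t.Sublist w) (hut : List.Forall₂ (· ≤ ·) u t)
    (hu : IsComposition u) (hw : IsComposition w) (hs : u.sum < w.sum) :
    ∃ v, IsComposition v ∧ CompLE u v ∧ CompLE v w ∧ v.sum = u.sum + 1 := by
  induction ht generalizing u with
  | slnil =>
    cases hut; simp at hs
  | @cons t w' c ht ih =>
    have hw' : IsComposition w' := fun x hx => hw x (by simp [hx])
    by_cases hlt : u.sum < w'.sum
    · obtain ⟨v, hv1, hv2, hv3, hv4⟩ := ih hut hu hw' hlt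
      obtain ⟨s, hsw, hvs⟩ := hv3
      exact ⟨v, hv1, hv2, ⟨s, hsw.cons c, hvs⟩, hv4⟩
    · have h1 := forall2_sum_le hut
      have h2 := my_sublist_sum_le ht
      have hsc : (c :: w').sum = c + w'.sum := by simp
      have hut' : u = t := forall2_eq_of_sum hut (by omega)
      have htw : t = w' := sublist_eq_of_sum ht hw' (by omega)
      subst hut'; subst htw
      refine ⟨1 :: u, ?_, ?_, ?_, by simp [Nat.add_comm]⟩
      · intro x hx; rcases List.mem_cons.mp hx with rfl | hx; · omega
        exact hu x hx
      · exact ⟨u, List.sublist_cons_self 1 u, (List.forall₂_same).2 fun _ _ => le_refl _⟩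
      · refine ⟨c :: u, List.Sublist.refl _, List.Forall₂.cons (hw c (by simp)) ?_⟩
        exact (List.forall₂_same).2 fun _ _ => le_refl _
  | @cons_cons t w' c ht ih =>
    have hw' : IsComposition w' := fun x hx => hw x (by simp [hx])
    obtain ⟨b, u', hbc, hut', rfl⟩ := List.forall₂_cons_right_iff.mp hut
    have hu' : IsComposition u' := fun x hx => hu x (by simp [hx])
    by_cases hbe : b < c
    · refine ⟨(b+1) :: u', ?_, ?_, ?_, by simp; omega⟩
      · intro x hx; rcases List.mem_cons.mp hx with rfl | hx; · omega
        exact hu x (by simp [hx])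
      · exact ⟨(b+1) :: u', List.Sublist.refl _,
          List.Forall₂.cons (by omega) ((List.forall₂_same).2 fun _ _ => le_refl _)⟩
      · exact ⟨c :: t, (ht.cons₂ c), List.Forall₂.cons (by omega) hut'⟩
    · have hbc' : b = c := by omega
      subst hbc'
      have hsum : u'.sum < w'.sum := by
        simp only [List.sum_cons] at hs; omega
      obtain ⟨v, hv1, hv2, hv3, hv4⟩ := ih hut' hu' hw' hsum
      obtain ⟨s1, hs1, hs2⟩ := hv2
      obtain ⟨s2, hs3, hs4⟩ := hv3
      refine ⟨b :: v, ?_, ?_, ?_, by simp; omega⟩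
      · intro x hx; rcases List.mem_cons.mp hx with rfl | hx
        · exact hu x (by simp)
        · exact hv1 x hx
      · exact ⟨b :: s1, hs1.cons₂ b, List.Forall₂.cons (le_refl _) hs2⟩
      · exact ⟨b :: s2, hs3.cons₂ b, List.Forall₂.cons (le_refl _) hs4⟩

lemma grow {u w : List ℕ} (h : CompLE u w) (hu : IsComposition u) (hw : IsComposition w)
    (d : ℕ) (hd : u.sum + d ≤ w.sum) :
    ∃ v, IsComposition v ∧ CompLE u v ∧ CompLE v w ∧ v.sum = u.sum + d := by
  induction d with
  | zero => exact ⟨u, hu, compLE_refl u, h, by simp⟩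
  | succ d ih =>
    obtain ⟨v, hv1, hv2, hv3, hv4⟩ := ih (by omega)
    obtain ⟨t, htw, hvt⟩ := hv3
    obtain ⟨v', h1, h2, h3, h4⟩ := step htw hvt hv1 hw (by omega)
    exact ⟨v', h1, compLE_trans hv2 h2, h3, by omega⟩

theorem kDel_determines_jDel (k n : ℕ) (w w' : List ℕ)
    (hw : IsComposition w) (hw' : IsComposition w')
    (hnw : w.sum = n) (hnw' : w'.sum = n) (hk : k + 1 ≤ n)
    (hdel : kDel k w = kDel k w') :
    ∀ j : ℕ, k ≤ j → j ≤ n - 1 → kDel j w = kDel j w' := by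
  have key : ∀ (W W' : List ℕ), IsComposition W → IsComposition W' →
      W.sum = n → W'.sum = n → kDel k W = kDel k W' →
      ∀ j, k ≤ j → j ≤ n - 1 → kDel j W ⊆ kDel j W' := by
    intro W W' hW hW' hnW hnW' hD j hkj hjn u hu
    obtain ⟨hu1, hu2, hu3⟩ := hu
    obtain ⟨v, hv1, hv2, hv3, hv4⟩ := grow hu2 hu1 hW (j - k) (by omega)
    have hvk : v ∈ kDel k W := ⟨hv1, hv3, by omega⟩
    rw [hD] at hvk
    obtain ⟨hv1', hv2', hv3'⟩ := hvk
    exact ⟨hu1, compLE_trans hv2 hv2', by omega⟩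
  intro j hkj hjn
  exact Set.Subset.antisymm (key w w' hw hw' hnw hnw' hdel j hkj hjn)
    (key w' w hw' hw hnw' hnw hdel.symm j hkj hjn)
end

section
/- For any composition w, the lengths of k-deletions of w form an interval: if there is a k-deletion of length p and a k-deletion of length q with p ≤ q, then for every p ≤ r ≤ q there is a k-deletion of w of length r. Moreover, the maximum length of a k-deletion of w is min(|w|, ‖w‖ − k) when ex(w) ≥ k or w has enough 1's; specifically, if ex(w) ≥ k then some k-deletion of w has length |w|, and if w has at least k entries equal to 1 then some k-deletion of w has length |w| − k. -/
/-- Greedily decrease entries of `w` (each down to at least 1) by a total of `k`. -/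
def reduceBy : ℕ → List ℕ → List ℕ
  | _, [] => []
  | k, a :: t => (a - min k (a - 1)) :: reduceBy (k - min k (a - 1)) t

lemma length_le_sum_of_comp : ∀ {w : List ℕ}, IsComposition w → w.length ≤ w.sum := by
  intro w
  induction w with
  | nil => intro; simp
  | cons a t ih =>
    intro h
    have ha : 1 ≤ a := h a (by simp)
    have := ih (fun x hx => h x (by simp [hx]))
    simp only [List.length_cons, List.sum_cons]
    omega

lemma reduceBy_length : ∀ (k : ℕ) (w : List ℕ), (reduceBy k w).length = w.length := by
  intro k w
  induction w generalizing k with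
  | nil => rfl
  | cons a t ih => simp [reduceBy, ih]

lemma reduceBy_forall₂ : ∀ (k : ℕ) (w : List ℕ), List.Forall₂ (· ≤ ·) (reduceBy k w) w := by
  intro k w
  induction w generalizing k with
  | nil => exact List.Forall₂.nil
  | cons a t ih => exact List.Forall₂.cons (by omega) (ih _)

lemma reduceBy_nil (k : ℕ) : reduceBy k [] = [] := rfl

lemma reduceBy_comp : ∀ (k : ℕ) (w : List ℕ), IsComposition w → IsComposition (reduceBy k w) := by
  intro k w
  induction w generalizing k with
  | nil => intro _; exact fun x hx => by rw [reduceBy_nil] at hx; simp at hx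
  | cons a t ih =>
    intro h x hx
    have ha : 1 ≤ a := h a (by simp)
    simp only [reduceBy, List.mem_cons] at hx
    rcases hx with rfl | hx
    · omega
    · exact ih _ (fun y hy => h y (by simp [hy])) x hx

lemma reduceBy_sum : ∀ (k : ℕ) (w : List ℕ), IsComposition w → k + w.length ≤ w.sum →
    (reduceBy k w).sum + k = w.sum := by
  intro k w
  induction w generalizing k with
  | nil => intro _ h; rw [reduceBy_nil]; simp at h ⊢; omega
  | cons a t ih =>
    intro h hk
    have ha : 1 ≤ a := h a (by simp)
    have ht : IsComposition t := fun y hy => h y (by simp [hy])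
    have hlt : t.length ≤ t.sum := length_le_sum_of_comp ht
    simp only [List.length_cons, List.sum_cons] at hk ⊢
    have hih := ih (k - min k (a - 1)) ht (by omega)
    simp only [reduceBy, List.sum_cons]
    omega

lemma sublist_extend {α : Type*} : ∀ (w v : List α), v.Sublist w → ∀ r, v.length ≤ r →
    r ≤ w.length → ∃ v', v.Sublist v' ∧ v'.Sublist w ∧ v'.length = r := by
  intro w
  induction w with
  | nil =>
    intro v hv r h1 h2
    simp at h2
    exact ⟨v, List.Sublist.refl v, hv, by omega⟩
  | cons a t ih =>
    intro v hv r h1 h2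
    rcases Nat.lt_or_ge r (t.length + 1) with hr | hr
    · cases hv with
      | cons =>
        rename_i hv'
        obtain ⟨v', h3, h4, h5⟩ := ih v hv' r h1 (by omega)
        exact ⟨v', h3, h4.cons a, h5⟩
      | cons_cons =>
        rename_i v₂ hv'
        cases r with
        | zero => simp at h1
        | succ r' =>
          obtain ⟨v', h3, h4, h5⟩ := ih v₂ hv' r' (by simpa using h1) (by omega)
          exact ⟨a :: v', h3.cons₂ a, h4.cons₂ a, by simp [h5]⟩
    · -- r = w.length, take w itself
      have : r = t.length + 1 := by
        simp only [List.length_cons] at h2; omega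
      exact ⟨a :: t, hv, List.Sublist.refl _, by simp [this]⟩

/-- Delete (up to) `k` entries equal to 1. -/
def delOnes : List ℕ → ℕ → List ℕ
  | [], _ => []
  | a :: t, k => if a = 1 ∧ k ≠ 0 then delOnes t (k - 1) else a :: delOnes t k

lemma delOnes_zero : ∀ w : List ℕ, delOnes w 0 = w := by
  intro w
  induction w with
  | nil => rfl
  | cons a t ih => simp [delOnes, ih]

lemma delOnes_sublist : ∀ (w : List ℕ) (k : ℕ), (delOnes w k).Sublist w := by
  intro w
  induction w with
  | nil => intro k; exact List.Sublist.refl _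
  | cons a t ih =>
    intro k
    by_cases h : a = 1 ∧ k ≠ 0
    · simp only [delOnes, if_pos h]; exact (ih _).cons a
    · simp only [delOnes, if_neg h]; exact (ih _).cons₂ a

lemma delOnes_sum : ∀ (w : List ℕ) (k : ℕ), k ≤ w.count 1 →
    (delOnes w k).sum + k = w.sum ∧ (delOnes w k).length + k = w.length := by
  intro w
  induction w with
  | nil => intro k h; simp at h; simp [delOnes, h]
  | cons a t ih =>
    intro k h
    by_cases ha : a = 1 ∧ k ≠ 0
    · have hc : (a :: t).count 1 = t.count 1 + 1 := by
        simp [List.count_cons, ha.1]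
      obtain ⟨h1, h2⟩ := ih (k - 1) (by omega)
      simp only [delOnes]
      rw [if_pos ha]
      simp only [List.sum_cons, List.length_cons, ha.1]
      constructor <;> omega
    · rcases Nat.eq_zero_or_pos k with rfl | hk
      · simp [delOnes, delOnes_zero]
      · have ha1 : a ≠ 1 := fun h' => ha ⟨h', by omega⟩
        have hc : (a :: t).count 1 = t.count 1 := by
          simp [List.count_cons, ha1]
        obtain ⟨h1, h2⟩ := ih k (by omega)
        simp only [delOnes]
        rw [if_neg ha]
        simp only [List.sum_cons, List.length_cons]
        constructor <;> omega

lemma comp_of_sublist {u w : List ℕ} (h : u.Sublist w) (hw : IsComposition w) :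
    IsComposition u := fun x hx => hw x (h.mem hx)

theorem kDel_lengths_interval (k : ℕ) (w : List ℕ) (hw : IsComposition w)
    (hk : k + 1 ≤ w.sum) :
    (∀ p q r : ℕ, (∃ u ∈ kDel k w, u.length = p) → (∃ u ∈ kDel k w, u.length = q) →
      p ≤ r → r ≤ q → ∃ u ∈ kDel k w, u.length = r) ∧
    (k ≤ w.sum - w.length → ∃ u ∈ kDel k w, u.length = w.length) ∧
    (k ≤ w.count 1 → ∃ u ∈ kDel k w, u.length + k = w.length) := by
  refine ⟨?_, ?_, ?_⟩
  · rintro p q r ⟨up, ⟨hupc, ⟨vp, hvpw, hvp⟩, hups⟩, rfl⟩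
      ⟨uq, ⟨huqc, ⟨vq, hvqw, hvq⟩, huqs⟩, rfl⟩ hpr hrq
    -- s := w.sum - k = up.sum = uq.sum
    have hqle : uq.length ≤ uq.sum := length_le_sum_of_comp huqc
    have hrs : r ≤ uq.sum := le_trans hrq hqle
    have hqw : uq.length ≤ w.length := by
      have := hvq.length_eq
      have := hvqw.length_le
      omega
    have hvplen : vp.length = up.length := hvp.length_eq.symm
    -- extend vp to length r
    obtain ⟨v', hvv', hv'w, hv'len⟩ := sublist_extend w vp hvpw r (by omega) (by omega)
    have hv'comp : IsComposition v' := comp_of_sublist hv'w hw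
    have hv'sum : up.sum ≤ v'.sum :=
      le_trans (forall₂_sum_le hvp) (hvv'.sum_le_sum (fun a _ => Nat.zero_le a))
    set m := v'.sum - up.sum with hm
    have hsum_eq : up.sum = uq.sum := by omega
    refine ⟨reduceBy m v', ⟨reduceBy_comp m v' hv'comp,
      ⟨v', hv'w, reduceBy_forall₂ m v'⟩, ?_⟩, by rw [reduceBy_length, hv'len]⟩
    have : (reduceBy m v').sum + m = v'.sum := by
      apply reduceBy_sum m v' hv'comp
      rw [hv'len]
      omega
    omega
  · intro h
    have hlen : w.length ≤ w.sum := length_le_sum_of_comp hw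
    refine ⟨reduceBy k w, ⟨reduceBy_comp k w hw, ⟨w, List.Sublist.refl w,
      reduceBy_forall₂ k w⟩, ?_⟩, reduceBy_length k w⟩
    exact reduceBy_sum k w hw (by omega)
  · intro h
    obtain ⟨h1, h2⟩ := delOnes_sum w k h
    have hsub := delOnes_sublist w k
    exact ⟨delOnes w k, ⟨comp_of_sublist hsub hw,
      ⟨delOnes w k, hsub, List.forall₂_same.mpr (fun x _ => le_refl x)⟩, h1⟩, h2⟩
end

section
/- The map sending a layered permutation σ_1 ⊕ σ_2 ⊕ ··· ⊕ σ_m (direct sum of decreasing permutations of lengths c_1, ..., c_m) to the composition (c_1, ..., c_m) is an order-preserving bijection between layered permutations of n and compositions of n, where layered permutations are ordered by the pattern-containment order and compositions by the relation u ≤ w iff u embeds entrywise into a subword of w. -/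
/-- The layered permutation (as a word on {0,…,n-1}) associated to a composition. -/
def layeredList : List ℕ → List ℕ
  | [] => []
  | c :: cs => (List.range c).reverse ++ (layeredList cs).map (· + c)

/-- A word is a layered permutation if it is a direct sum of decreasing permutations. -/
inductive IsLayered : List ℕ → Prop
  | nil : IsLayered []
  | cons (c : ℕ) (q : List ℕ) : 1 ≤ c → IsLayered q →
      IsLayered ((List.range c).reverse ++ q.map (· + c))

/-- Pattern containment: s is order-isomorphic to a subword of p. -/
def PattCont (s p : List ℕ) : Prop :=
  ∃ v : List ℕ, v.Sublist p ∧ v.length = s.length ∧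
    ∀ i j : ℕ, i < s.length → j < s.length →
      (s.getD i 0 < s.getD j 0 ↔ v.getD i 0 < v.getD j 0)

/-! ### Auxiliary lemmas -/

lemma layeredList_length (c : List ℕ) : (layeredList c).length = c.sum := by
  induction c with
  | nil => rfl
  | cons a cs ih => simp [layeredList, ih]

lemma layeredList_perm (c : List ℕ) : (layeredList c).Perm (List.range c.sum) := by
  induction c with
  | nil => rfl
  | cons a cs ih =>
    have hr : List.range (a :: cs).sum = List.range a ++ (List.range cs.sum).map (a + ·) := by
      rw [List.sum_cons]; exact List.range_add
    rw [hr, show layeredList (a :: cs) = (List.range a).reverse ++ (layeredList cs).map (· + a)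
      from rfl]
    refine (List.reverse_perm _).append ?_
    have h2 : (List.range cs.sum).map (a + ·) = (List.range cs.sum).map (· + a) :=
      List.map_congr_left (fun x _ => Nat.add_comm a x)
    rw [h2]
    exact ih.map _

lemma getD_revRange {a i : ℕ} (h : i < a) : ((List.range a).reverse).getD i 0 = a - 1 - i := by
  rw [List.getD_eq_getElem _ _ (by simpa using h)]
  simp

lemma getD_map_add {l : List ℕ} {k i : ℕ} (h : i < l.length) :
    (l.map (· + k)).getD i 0 = l.getD i 0 + k := by
  rw [List.getD_eq_getElem _ _ (by simpa using h), List.getD_eq_getElem _ _ h, List.getElem_map]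

lemma getD_layerL {a b i : ℕ} {t : List ℕ} (h : i < a) :
    ((List.range a).reverse ++ t.map (· + b)).getD i 0 = a - 1 - i := by
  rw [List.getD_append _ _ _ _ (by simpa using h), getD_revRange h]

lemma getD_layerR {a b i : ℕ} {t : List ℕ} (h1 : a ≤ i) (h2 : i - a < t.length) :
    ((List.range a).reverse ++ t.map (· + b)).getD i 0 = t.getD (i - a) 0 + b := by
  rw [List.getD_append_right _ _ _ _ (by simpa using h1)]
  simp only [List.length_reverse, List.length_range]
  exact getD_map_add h2

lemma pattCont_shift (s : List ℕ) (b : ℕ) (w : List ℕ) (h : PattCont s (layeredList w)) :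
    PattCont s (layeredList (b :: w)) := by
  obtain ⟨v, hsub, hlen, hiso⟩ := h
  refine ⟨v.map (· + b), ?_, by simpa using hlen, ?_⟩
  · exact (hsub.map _).trans (List.sublist_append_right _ _)
  · intro i j hi hj
    rw [getD_map_add (by omega), getD_map_add (by omega)]
    rw [Nat.add_lt_add_iff_right]
    exact hiso i j hi hj

lemma pattCont_of_forall₂_sublist :
    ∀ (w u v : List ℕ), v.Sublist w → List.Forall₂ (· ≤ ·) u v →
      PattCont (layeredList u) (layeredList w) := by
  intro w
  induction w with
  | nil =>
    intro u v hs hf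
    have hv : v = [] := List.sublist_nil.1 hs
    subst hv
    have hu : u = [] := by cases hf; rfl
    subst hu
    exact ⟨[], List.Sublist.refl _, rfl, fun i j hi _ => by simp [layeredList] at hi⟩
  | cons b w' ih =>
    intro u v hs hf
    rcases List.sublist_cons_iff.1 hs with h | ⟨v'', rfl, hv''⟩
    · exact pattCont_shift _ b w' (ih u v h hf)
    · obtain ⟨a, u'', hab, hf', rfl⟩ := List.forall₂_cons_right_iff.1 hf
      obtain ⟨v₀, hsub₀, hlen₀, hiso₀⟩ := ih u'' v'' hv'' hf'
      set M := (layeredList u'').length with hM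
      have hlenS : (layeredList (a :: u'')).length = a + M := by
        simp [layeredList, hM]
      refine ⟨(List.range a).reverse ++ v₀.map (· + b), ?_, ?_, ?_⟩
      · exact ((List.range_sublist.2 hab).reverse).append (hsub₀.map _)
      · simp [hlen₀, layeredList, hM]
      · intro i j hi hj
        rw [hlenS] at hi hj
        have hsL : ∀ k, k < a → (layeredList (a :: u'')).getD k 0 = a - 1 - k :=
          fun k hk => getD_layerL hk
        have hsR : ∀ k, a ≤ k → k - a < M →
            (layeredList (a :: u'')).getD k 0 = (layeredList u'').getD (k - a) 0 + a :=
          fun k h1 h2 => getD_layerR h1 h2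
        have hvL : ∀ k, k < a →
            ((List.range a).reverse ++ v₀.map (· + b)).getD k 0 = a - 1 - k :=
          fun k hk => getD_layerL hk
        have hvR : ∀ k, a ≤ k → k - a < M →
            ((List.range a).reverse ++ v₀.map (· + b)).getD k 0 = v₀.getD (k - a) 0 + b :=
          fun k h1 h2 => getD_layerR h1 (by omega)
        rcases Nat.lt_or_ge i a with hia | hia <;> rcases Nat.lt_or_ge j a with hja | hja
        · rw [hsL i hia, hsL j hja, hvL i hia, hvL j hja]
        · rw [hsL i hia, hsR j hja (by omega), hvL i hia, hvR j hja (by omega)]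
          constructor <;> intro <;> omega
        · rw [hsR i hia (by omega), hsL j hja, hvR i hia (by omega), hvL j hja]
          constructor <;> intro <;> omega
        · rw [hsR i hia (by omega), hsR j hja (by omega), hvR i hia (by omega),
            hvR j hja (by omega)]
          rw [Nat.add_lt_add_iff_right, Nat.add_lt_add_iff_right]
          exact hiso₀ (i - a) (j - a) (by omega) (by omega)

lemma getD_lt_of_pairwise {l : List ℕ} (h : l.Pairwise (· > ·)) {i j : ℕ} (hij : i < j)
    (hj : j < l.length) : l.getD j 0 < l.getD i 0 := by
  rw [List.getD_eq_getElem _ _ hj, List.getD_eq_getElem _ _ (hij.trans hj)]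
  exact List.pairwise_iff_getElem.1 h i j (hij.trans hj) hj hij

lemma compLE_of_pattCont :
    ∀ (w u : List ℕ), IsComposition u → IsComposition w →
      PattCont (layeredList u) (layeredList w) → CompLE u w := by
  intro w
  induction w with
  | nil =>
    intro u hu _ h
    obtain ⟨v, hsub, hlen, -⟩ := h
    have hv : v = [] := List.sublist_nil.1 (by simpa [layeredList] using hsub)
    subst hv
    have hu0 : u = [] := by
      cases u with
      | nil => rfl
      | cons a u' =>
        exfalso
        have h1 : 1 ≤ a := hu a (by simp)
        have h2 : (layeredList (a :: u')).length = a + u'.sum := by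
          simp [layeredList_length]
        simp only [List.length_nil] at hlen
        omega
    subst hu0
    exact ⟨[], by simp, List.Forall₂.nil⟩
  | cons b w' ih =>
    intro u hu hw h
    cases u with
    | nil => exact ⟨[], List.nil_sublist _, List.Forall₂.nil⟩
    | cons a u' =>
      obtain ⟨v, hsub, hlen, hiso⟩ := h
      rw [show layeredList (b :: w') = (List.range b).reverse ++ (layeredList w').map (· + b)
        from rfl] at hsub
      obtain ⟨v₁, v₂, rfl, hs1, hs2⟩ := List.sublist_append_iff.1 hsub
      obtain ⟨v₂₀, hs20, rfl⟩ := List.sublist_map_iff.1 hs2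
      set M := (layeredList u').length with hMdef
      have ha : 1 ≤ a := hu a (by simp)
      have hb : 1 ≤ b := hw b (by simp)
      have hu' : IsComposition u' := fun x hx => hu x (by simp [hx])
      have hw' : IsComposition w' := fun x hx => hw x (by simp [hx])
      have hlenS : (layeredList (a :: u')).length = a + M := by simp [layeredList, hMdef]
      set L := v₁.length with hLdef
      have hT : L + v₂₀.length = a + M := by
        have := hlen
        simp only [List.length_append, List.length_map, hlenS] at this
        omega
      rw [hlenS] at hiso
      have hsL : ∀ k, k < a → (layeredList (a :: u')).getD k 0 = a - 1 - k :=
        fun k hk => getD_layerL hk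
      have hsR : ∀ k, a ≤ k → k - a < M →
          (layeredList (a :: u')).getD k 0 = (layeredList u').getD (k - a) 0 + a :=
        fun k h1 h2 => getD_layerR h1 h2
      have hvL : ∀ k, k < L → (v₁ ++ v₂₀.map (· + b)).getD k 0 = v₁.getD k 0 :=
        fun k hk => List.getD_append _ _ _ _ hk
      have hvR : ∀ k, L ≤ k → k - L < v₂₀.length →
          (v₁ ++ v₂₀.map (· + b)).getD k 0 = v₂₀.getD (k - L) 0 + b := by
        intro k h1 h2
        rw [List.getD_append_right _ _ _ _ h1]
        exact getD_map_add h2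
      have hpw : v₁.Pairwise (· > ·) := by
        refine List.Pairwise.sublist hs1 ?_
        have : (List.range b).Pairwise (· < ·) := List.pairwise_lt_range
        exact List.pairwise_reverse.2 (by simpa [flip] using this)
      have hv1lt : ∀ k, k < L → v₁.getD k 0 < b := by
        intro k hk
        rw [List.getD_eq_getElem _ _ hk]
        have hmem : v₁[k] ∈ (List.range b).reverse := hs1.subset (List.getElem_mem hk)
        simpa using hmem
      rcases Nat.eq_zero_or_pos L with hL0 | hL1
      · -- all of v lies in the higher layers
        have hv1 : v₁ = [] := List.length_eq_zero_iff.1 hL0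
        subst hv1
        have hpc : PattCont (layeredList (a :: u')) (layeredList w') := by
          refine ⟨v₂₀, hs20, ?_, ?_⟩
          · rw [hlenS]; omega
          · intro i j hi hj
            rw [hlenS] at hi hj
            have := hiso i j hi hj
            simp only [List.nil_append] at this
            rw [getD_map_add (by omega), getD_map_add (by omega),
              Nat.add_lt_add_iff_right] at this
            exact this
        obtain ⟨v', hv', hf⟩ := ih (a :: u') hu hw' hpc
        exact ⟨v', hv'.cons b, hf⟩
      · -- the first layer of u maps into the first layer of w
        have haL : a ≤ L := by
          by_contra hcon
          push_neg at hcon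
          -- position L is in the second part, but s_L < s_0 forces v_L < v_0 < b
          have hv0 : (v₁ ++ v₂₀.map (· + b)).getD 0 0 = v₁.getD 0 0 := hvL 0 hL1
          have hvLval : (v₁ ++ v₂₀.map (· + b)).getD L 0 = v₂₀.getD 0 0 + b := by
            have : L - L < v₂₀.length := by omega
            simpa using hvR L le_rfl this
          have hs0 : (layeredList (a :: u')).getD 0 0 = a - 1 := by
            have := hsL 0 ha; simpa using this
          have hsLv : (layeredList (a :: u')).getD L 0 = a - 1 - L := hsL L hcon
          have hkey := (hiso L 0 (by omega) (by omega)).1 (by omega)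
          have := hv1lt 0 hL1
          omega
        have hLa : L ≤ a := by
          by_contra hcon
          push_neg at hcon
          -- position a is in v₁ but s_a > s_0 forces v_a > v_0
          have hM1 : 1 ≤ M := by omega
          have hs0 : (layeredList (a :: u')).getD 0 0 = a - 1 := by
            have := hsL 0 ha; simpa using this
          have hsa : (layeredList (a :: u')).getD a 0 = (layeredList u').getD 0 0 + a := by
            have := hsR a le_rfl (by omega); simpa using this
          have hkey := (hiso 0 a (by omega) (by omega)).1 (by omega)
          rw [hvL 0 hL1, hvL a hcon] at hkey
          have := getD_lt_of_pairwise hpw (show 0 < a by omega) hcon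
          omega
        have hLa' : L = a := le_antisymm hLa haL
        have hab : a ≤ b := by
          have : L ≤ b := by
            have := hs1.length_le
            simpa using this
          omega
        have hv2len : v₂₀.length = M := by omega
        have hpc : PattCont (layeredList u') (layeredList w') := by
          refine ⟨v₂₀, hs20, by rw [hv2len], ?_⟩
          intro i j hi hj
          have hkey := hiso (a + i) (a + j) (by omega) (by omega)
          rw [hsR (a + i) (by omega) (by omega), hsR (a + j) (by omega) (by omega),
            hvR (a + i) (by omega) (by omega), hvR (a + j) (by omega) (by omega)] at hkey
          simp only [Nat.add_sub_cancel_left, hLa'] at hkey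
          rw [Nat.add_lt_add_iff_right, Nat.add_lt_add_iff_right] at hkey
          simpa [hLa'] using hkey
        obtain ⟨v', hv', hf⟩ := ih u' hu' hw' hpc
        exact ⟨b :: v', hv'.cons₂ b, List.Forall₂.cons hab hf⟩

lemma isLayered_layeredList : ∀ c : List ℕ, IsComposition c → IsLayered (layeredList c) := by
  intro c
  induction c with
  | nil => intro _; exact IsLayered.nil
  | cons a cs ih =>
    intro hc
    exact IsLayered.cons a (layeredList cs) (hc a (by simp))
      (ih fun x hx => hc x (List.mem_cons_of_mem _ hx))

lemma exists_comp_of_isLayered : ∀ p, IsLayered p → ∃ c, IsComposition c ∧ layeredList c = p := by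
  intro p hp
  induction hp with
  | nil => exact ⟨[], fun x hx => by simp at hx, rfl⟩
  | cons c q hc _ ih =>
    obtain ⟨cs, hcs, rfl⟩ := ih
    refine ⟨c :: cs, ?_, rfl⟩
    intro x hx
    rcases List.mem_cons.1 hx with rfl | hx
    · exact hc
    · exact hcs x hx

lemma layeredList_injOn :
    ∀ c₁, IsComposition c₁ → ∀ c₂, IsComposition c₂ → layeredList c₁ = layeredList c₂ →
      c₁ = c₂ := by
  intro c₁
  induction c₁ with
  | nil =>
    intro _ c₂ h2 h
    cases c₂ with
    | nil => rfl
    | cons b bs =>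
      exfalso
      have hb : 1 ≤ b := h2 b (by simp)
      have := congrArg List.length h
      simp [layeredList_length] at this
      omega
  | cons a as ih =>
    intro h1 c₂ h2 h
    cases c₂ with
    | nil =>
      exfalso
      have hb : 1 ≤ a := h1 a (by simp)
      have := congrArg List.length h
      simp [layeredList_length] at this
      omega
    | cons b bs =>
      have hVa : 1 ≤ a := h1 a (by simp)
      have hVb : 1 ≤ b := h2 b (by simp)
      have hhead := congrArg (fun l => l.getD 0 0) h
      rw [show layeredList (a :: as) = (List.range a).reverse ++ (layeredList as).map (· + a)
        from rfl, show layeredList (b :: bs) = (List.range b).reverse ++ (layeredList bs).map (· + b)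
        from rfl] at hhead h
      rw [getD_layerL (show 0 < a by omega), getD_layerL (show 0 < b by omega)] at hhead
      have hab : a = b := by omega
      subst hab
      have htail := List.append_cancel_left h
      have hmap : layeredList as = layeredList bs :=
        List.map_injective_iff.2 (add_left_injective a) htail
      have := ih (fun x hx => h1 x (List.mem_cons_of_mem _ hx)) bs
        (fun x hx => h2 x (List.mem_cons_of_mem _ hx)) hmap
      rw [this]

theorem layered_composition_bijection (n : ℕ) :
    Set.BijOn layeredList {c | IsComposition c ∧ c.sum = n}
      {p | p.Perm (List.range n) ∧ IsLayered p} ∧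
    ∀ u w : List ℕ, IsComposition u → IsComposition w →
      (CompLE u w ↔ PattCont (layeredList u) (layeredList w)) := by
  constructor
  · refine ⟨?_, ?_, ?_⟩
    · rintro c ⟨hc, rfl⟩
      exact ⟨layeredList_perm c, isLayered_layeredList c hc⟩
    · rintro c₁ ⟨h1, -⟩ c₂ ⟨h2, -⟩ h
      exact layeredList_injOn c₁ h1 c₂ h2 h
    · rintro p ⟨hperm, hlay⟩
      obtain ⟨c, hc, rfl⟩ := exists_comp_of_isLayered p hlay
      refine ⟨c, ⟨hc, ?_⟩, rfl⟩
      have := hperm.length_eq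
      simpa [layeredList_length] using this
  · intro u w hu hw
    constructor
    · rintro ⟨v, hs, hf⟩
      exact pattCont_of_forall₂_sublist w u v hs hf
    · intro h
      exact compLE_of_pattCont w u hu hw h
end
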